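/- arXiv:2211.07167 — 7 statements merged into one kernel-verified Lean document; each statement's English description precedes it below -/
import Mathlib

section
/- There exists a non-compact metric space X and an expansive homeomorphism g: X → X (in fact with expansivity constant 1) that is not asymptotically expansive, hence not bi-asymptotically expansive; since expansive homeomorphisms are weak bi-asymptotically expansive, g is weak bi-asymptotically expansive but not bi-asymptotically expansive. -/
open Filter Topology Function

/-- A full orbit (element of the inverse limit) of `f`. -/
def FullOrbit {X : Type*} (f : X → X) (x : ℤ → X) : Prop := ∀ n : ℤ, f (x n) = x (n + 1)

/-- `f` is bi-asymptotically `c`-expansive with constant `c`. -/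
def BiAsympCExpWith {X : Type*} [MetricSpace X] (f : X → X) (c : ℝ) : Prop :=
  (∀ x y : ℤ → X, FullOrbit f x → FullOrbit f y →
      (∀ n : ℕ, dist (x n) (y n) ≤ c) →
      Tendsto (fun n : ℕ => dist (x n) (y n)) atTop (𝓝 0)) ∧
  (∀ x y : ℤ → X, FullOrbit f x → FullOrbit f y →
      (∀ n : ℕ, dist (x (-(n : ℤ))) (y (-(n : ℤ))) ≤ c) →
      Tendsto (fun n : ℕ => dist (x (-(n : ℤ))) (y (-(n : ℤ)))) atTop (𝓝 0))

/-- `f` is bi-asymptotically `c`-expansive (for some constant). -/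
def BiAsympCExpansive {X : Type*} [MetricSpace X] (f : X → X) : Prop :=
  ∃ c > 0, BiAsympCExpWith f c

/-- `f` has the shadowing property. -/
def Shadowing {X : Type*} [MetricSpace X] (f : X → X) : Prop :=
  ∀ ε > 0, ∃ δ > 0, ∀ x : ℕ → X, (∀ n : ℕ, dist (f (x n)) (x (n + 1)) ≤ δ) →
    ∃ y : X, ∀ n : ℕ, dist (f^[n] y) (x n) ≤ ε

/-- `x` is a non-wandering point of `f`. -/
def NonWandering {X : Type*} [TopologicalSpace X] (f : X → X) (x : X) : Prop :=
  ∀ U : Set X, IsOpen U → x ∈ U → ∃ n : ℕ, 0 < n ∧ (f^[n] '' U ∩ U).Nonempty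

/-- There is a finite `α`-chain from `x` to `y`. -/
def ChainRel {X : Type*} [MetricSpace X] (f : X → X) (α : ℝ) (x y : X) : Prop :=
  ∃ (n : ℕ) (z : ℕ → X), 0 < n ∧ z 0 = x ∧ z n = y ∧
    ∀ i < n, dist (f (z i)) (z (i + 1)) ≤ α

/-- `x` is a chain recurrent point of `f`. -/
def ChainRecurrent {X : Type*} [MetricSpace X] (f : X → X) (x : X) : Prop :=
  ∀ α > 0, ChainRel f α x x

/-- chain equivalence of chain recurrent points -/
def ChainEquiv {X : Type*} [MetricSpace X] (f : X → X) (x y : X) : Prop :=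
  ∀ α > 0, ChainRel f α x y ∧ ChainRel f α y x

/-- basic sets: chain equivalence classes of `CR(f)` -/
def IsBasicSet {X : Type*} [MetricSpace X] (f : X → X) (B : Set X) : Prop :=
  ∃ x : X, ChainRecurrent f x ∧ B = {y | ChainRecurrent f y ∧ ChainEquiv f x y}

/-- the stable set of `x`. -/
def Ws {X : Type*} [MetricSpace X] (f : X → X) (x : X) : Set X :=
  {y | Tendsto (fun n : ℕ => dist (f^[n] x) (f^[n] y)) atTop (𝓝 0)}

/-- the unstable set of a full orbit `x`. -/
def Wu {X : Type*} [MetricSpace X] (f : X → X) (x : ℤ → X) : Set X :=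
  {y₀ | ∃ y : ℤ → X, FullOrbit f y ∧ y 0 = y₀ ∧
    Tendsto (fun n : ℕ => dist (x (-(n : ℤ))) (y (-(n : ℤ)))) atTop (𝓝 0)}

/-- `g` restricted to `A` is topologically transitive. -/
def TopTransOn {X : Type*} [TopologicalSpace X] (g : X → X) (A : Set X) : Prop :=
  ∀ U V : Set X, IsOpen U → IsOpen V → (U ∩ A).Nonempty → (V ∩ A).Nonempty →
    ∃ n : ℕ, 0 < n ∧ (g^[n] '' (U ∩ A) ∩ (V ∩ A)).Nonempty

/-- `g` restricted to `A` is topologically mixing. -/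
def TopMixingOn {X : Type*} [TopologicalSpace X] (g : X → X) (A : Set X) : Prop :=
  ∀ U V : Set X, IsOpen U → IsOpen V → (U ∩ A).Nonempty → (V ∩ A).Nonempty →
    ∃ N : ℕ, ∀ n ≥ N, (g^[n] '' (U ∩ A) ∩ (V ∩ A)).Nonempty

/-- `g` is asymptotically expansive with constant `c`. -/
def AsympExpWith {X : Type*} [MetricSpace X] (g : X → X) (c : ℝ) : Prop :=
  ∀ x y : X, (∀ n : ℕ, dist (g^[n] x) (g^[n] y) ≤ c) →
    Tendsto (fun n : ℕ => dist (g^[n] x) (g^[n] y)) atTop (𝓝 0)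

noncomputable section ExpEx
namespace ExpEx

@[ext] structure Pt where
  m : ℤ
  i : ℕ

/-- height parameter of the `i`-th branch (with `u 0 = 0`). -/
def u (i : ℕ) : ℝ := (i : ℝ)⁻¹

lemma u_nonneg (i : ℕ) : 0 ≤ u i := inv_nonneg.2 (Nat.cast_nonneg i)

lemma u_le_one (i : ℕ) : u i ≤ 1 := by
  rcases Nat.eq_zero_or_pos i with h | h
  · simp [u, h]
  · have : (1:ℝ) ≤ i := by exact_mod_cast h
    simpa [u] using inv_le_one_of_one_le₀ this

lemma u_inj : Function.Injective u := fun i j h => Nat.cast_injective (inv_injective h)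

lemma u_zero : u 0 = 0 := by simp [u]

/-- the embedding of the abstract set of points into `ℝ × ℝ`. -/
def fE (p : Pt) : ℝ × ℝ := (2 * p.m, Real.exp (-(p.m : ℝ) + u p.i) + u p.i)

lemma fE_inj : Function.Injective fE := by
  rintro ⟨m, i⟩ ⟨m', j⟩ h
  have h1 : (2 * (m:ℝ)) = 2 * (m':ℝ) := congrArg Prod.fst h
  have hm : m = m' := by exact_mod_cast (by linarith : (m:ℝ) = (m':ℝ))
  subst hm
  have h2 : Real.exp (-(m:ℝ) + u i) + u i = Real.exp (-(m:ℝ) + u j) + u j :=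
    congrArg Prod.snd h
  have hsm : StrictMono (fun t : ℝ => Real.exp (-(m:ℝ) + t) + t) := fun a b hab =>
    add_lt_add_of_le_of_lt (Real.exp_le_exp.2 (by linarith)) hab
  have : u i = u j := hsm.injective h2
  exact Pt.ext rfl (u_inj this)

instance : MetricSpace Pt := MetricSpace.induced fE fE_inj inferInstance

lemma dist_def (p q : Pt) : dist p q = dist (fE p) (fE q) := rfl

lemma dist_fst_le (p q : Pt) : |2 * (p.m:ℝ) - 2 * q.m| ≤ dist p q := by
  rw [dist_def, Prod.dist_eq]
  exact le_trans (le_of_eq (Real.dist_eq _ _).symm) (le_max_left _ _)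

lemma dist_same (m : ℤ) (i j : ℕ) (h : u j ≤ u i) :
    dist (⟨m, i⟩ : Pt) ⟨m, j⟩ =
      Real.exp (-(m:ℝ)) * (Real.exp (u i) - Real.exp (u j)) + (u i - u j) := by
  have hexp : Real.exp (u j) ≤ Real.exp (u i) := Real.exp_le_exp.2 h
  have hpos := Real.exp_pos (-(m:ℝ))
  have key : (0:ℝ) ≤ Real.exp (-(m:ℝ)) * (Real.exp (u i) - Real.exp (u j)) + (u i - u j) := by
    nlinarith
  rw [dist_def, Prod.dist_eq]
  simp only [fE, Real.dist_eq]
  rw [Real.exp_add, Real.exp_add]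
  rw [sub_self, abs_zero]
  rw [show Real.exp (-(m:ℝ)) * Real.exp (u i) + u i -
      (Real.exp (-(m:ℝ)) * Real.exp (u j) + u j) =
      Real.exp (-(m:ℝ)) * (Real.exp (u i) - Real.exp (u j)) + (u i - u j) by ring]
  rw [abs_of_nonneg key, max_eq_right key]

lemma m_eq_of_dist_lt_two (p q : Pt) (h : dist p q < 2) : p.m = q.m := by
  have h1 := lt_of_le_of_lt (dist_fst_le p q) h
  rw [show 2 * (p.m:ℝ) - 2 * q.m = 2 * ((p.m:ℝ) - q.m) by ring, abs_mul, abs_two] at h1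
  have h2 : |(p.m:ℝ) - q.m| < 1 := by linarith
  have h3 : |((p.m - q.m : ℤ) : ℝ)| < 1 := by push_cast; exact h2
  rw [← Int.cast_abs] at h3
  have : |p.m - q.m| < 1 := by exact_mod_cast h3
  rw [abs_lt] at this
  omega

/-- shifting up contracts vertical distances. -/
lemma shift_le_aux (m : ℤ) (i j : ℕ) (h : u j ≤ u i) :
    dist (⟨m + 1, i⟩ : Pt) ⟨m + 1, j⟩ ≤ dist (⟨m, i⟩ : Pt) ⟨m, j⟩ := by
  rw [dist_same _ _ _ h, dist_same _ _ _ h]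
  have hexp : Real.exp (u j) ≤ Real.exp (u i) := Real.exp_le_exp.2 h
  have h1 : Real.exp (-((m:ℝ) + 1)) ≤ Real.exp (-(m:ℝ)) := Real.exp_le_exp.2 (by linarith)
  have h2 : (-(((m + 1 : ℤ)):ℝ)) = -((m:ℝ) + 1) := by push_cast; ring
  rw [h2]
  nlinarith [Real.exp_pos (-((m:ℝ)+1))]

lemma shift_le (p q : Pt) (hm : p.m = q.m) :
    dist (⟨p.m + 1, p.i⟩ : Pt) ⟨q.m + 1, q.i⟩ ≤ dist p q := by
  rcases p with ⟨m, i⟩; rcases q with ⟨m', j⟩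
  simp only at hm; subst hm
  rcases le_total (u j) (u i) with h | h
  · exact shift_le_aux m i j h
  · rw [dist_comm, dist_comm (⟨m,i⟩ : Pt)]
    exact shift_le_aux m j i h

/-- shifting down expands vertical distances by at most `e`. -/
lemma unshift_le_aux (m : ℤ) (i j : ℕ) (h : u j ≤ u i) :
    dist (⟨m - 1, i⟩ : Pt) ⟨m - 1, j⟩ ≤ Real.exp 1 * dist (⟨m, i⟩ : Pt) ⟨m, j⟩ := by
  rw [dist_same _ _ _ h, dist_same _ _ _ h]
  have hexp : Real.exp (u j) ≤ Real.exp (u i) := Real.exp_le_exp.2 h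
  have h2 : (-(((m - 1 : ℤ)):ℝ)) = -((m:ℝ)) + 1 := by push_cast; ring
  rw [h2, Real.exp_add]
  have h3 : (1:ℝ) ≤ Real.exp 1 := by
    nlinarith [Real.add_one_le_exp (1:ℝ)]
  nlinarith [Real.exp_pos (-(m:ℝ)), sub_nonneg.2 h]

lemma unshift_le (p q : Pt) (hm : p.m = q.m) :
    dist (⟨p.m - 1, p.i⟩ : Pt) ⟨q.m - 1, q.i⟩ ≤ Real.exp 1 * dist p q := by
  rcases p with ⟨m, i⟩; rcases q with ⟨m', j⟩
  simp only at hm; subst hm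
  rcases le_total (u j) (u i) with h | h
  · exact unshift_le_aux m i j h
  · rw [dist_comm, dist_comm (⟨m,i⟩ : Pt)]
    exact unshift_le_aux m j i h

/-- the shift map as an equivalence. -/
def shiftE : Pt ≃ Pt where
  toFun p := ⟨p.m + 1, p.i⟩
  invFun p := ⟨p.m - 1, p.i⟩
  left_inv p := by ext <;> simp
  right_inv p := by ext <;> simp

lemma shiftE_cont : Continuous shiftE := by
  rw [Metric.continuous_iff]
  intro b ε hε
  refine ⟨min 2 ε, lt_min two_pos hε, fun a ha => ?_⟩
  have hm : a.m = b.m := m_eq_of_dist_lt_two a b (lt_of_lt_of_le ha (min_le_left _ _))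
  calc dist (shiftE a) (shiftE b) ≤ dist a b := shift_le a b hm
    _ < ε := lt_of_lt_of_le ha (min_le_right _ _)

lemma shiftE_symm_cont : Continuous shiftE.symm := by
  rw [Metric.continuous_iff]
  intro b ε hε
  have he : (0:ℝ) < Real.exp 1 := Real.exp_pos 1
  refine ⟨min 2 (ε / Real.exp 1), lt_min two_pos (by positivity), fun a ha => ?_⟩
  have hm : a.m = b.m := m_eq_of_dist_lt_two a b (lt_of_lt_of_le ha (min_le_left _ _))
  have h1 : dist (shiftE.symm a) (shiftE.symm b) ≤ Real.exp 1 * dist a b := unshift_le a b hm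
  have h2 : dist a b < ε / Real.exp 1 := lt_of_lt_of_le ha (min_le_right _ _)
  calc dist (shiftE.symm a) (shiftE.symm b) ≤ Real.exp 1 * dist a b := h1
    _ < Real.exp 1 * (ε / Real.exp 1) := by
        rcases (dist_nonneg (x := shiftE.symm a) (y := shiftE.symm b)).lt_or_eq with _ | _
        · exact (mul_lt_mul_iff_right₀ he).2 h2
        · exact (mul_lt_mul_iff_right₀ he).2 h2
    _ = ε := by field_simp

/-- the shift homeomorphism. -/
def G : Pt ≃ₜ Pt := ⟨shiftE, shiftE_cont, shiftE_symm_cont⟩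

lemma G_apply (p : Pt) : G p = ⟨p.m + 1, p.i⟩ := rfl
lemma G_symm_apply (p : Pt) : G.symm p = ⟨p.m - 1, p.i⟩ := rfl

lemma G_zpow_apply : ∀ (n : ℤ) (p : Pt), (G.toEquiv ^ n) p = ⟨p.m + n, p.i⟩ := by
  intro n
  induction n using Int.induction_on with
  | zero => intro p; ext <;> simp
  | succ k ih =>
      intro p
      rw [zpow_add_one, Equiv.Perm.mul_apply]
      have : G.toEquiv p = (⟨p.m + 1, p.i⟩ : Pt) := rfl
      rw [this, ih]
      ext <;> simp <;> ring
  | pred k ih =>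
      intro p
      rw [zpow_sub_one, Equiv.Perm.mul_apply]
      have : (G.toEquiv)⁻¹ p = (⟨p.m - 1, p.i⟩ : Pt) := rfl
      rw [this, ih]
      ext <;> simp <;> ring

lemma G_iter_apply : ∀ (n : ℕ) (p : Pt), (⇑G)^[n] p = ⟨p.m + n, p.i⟩ := by
  intro n
  induction n with
  | zero => intro p; ext <;> simp
  | succ k ih =>
      intro p
      rw [Function.iterate_succ_apply]
      have : G p = (⟨p.m + 1, p.i⟩ : Pt) := rfl
      rw [this, ih]
      ext <;> simp <;> ring

lemma G_symm_iter_apply : ∀ (n : ℕ) (p : Pt), (⇑G.symm)^[n] p = ⟨p.m - n, p.i⟩ := by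
  intro n
  induction n with
  | zero => intro p; ext <;> simp
  | succ k ih =>
      intro p
      rw [Function.iterate_succ_apply]
      have : G.symm p = (⟨p.m - 1, p.i⟩ : Pt) := rfl
      rw [this, ih]
      ext <;> simp <;> ring

/-- on one fiber, going backwards far enough the distance exceeds 1. -/
lemma no_big (m : ℤ) (i j : ℕ) (hu : u j < u i) :
    ∃ n : ℤ, 1 < dist ((G.toEquiv ^ n) (⟨m, i⟩ : Pt)) ((G.toEquiv ^ n) ⟨m, j⟩) := by
  set Δ : ℝ := Real.exp (u i) - Real.exp (u j) with hΔ
  have hΔpos : 0 < Δ := sub_pos.2 (Real.exp_lt_exp.2 hu)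
  set K : ℕ := ⌈Δ⁻¹⌉₊ with hK
  refine ⟨-m - K, ?_⟩
  rw [G_zpow_apply, G_zpow_apply]
  simp only
  rw [show m + (-m - (K:ℤ)) = -(K:ℤ) by ring]
  rw [dist_same _ _ _ hu.le]
  rw [show (-((-(K:ℤ) : ℤ)):ℝ) = (K:ℝ) by push_cast; ring]
  have h1 : Δ⁻¹ ≤ (K:ℝ) := Nat.le_ceil _
  have h2 : (K:ℝ) + 1 ≤ Real.exp K := Real.add_one_le_exp _
  have h3 : Δ⁻¹ * Δ = 1 := inv_mul_cancel₀ hΔpos.ne'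
  have h4 : 1 < Real.exp (K:ℝ) * Δ := by nlinarith
  nlinarith [sub_pos.2 hu]

/-- `G` is expansive with constant 1. -/
lemma G_expansive (x y : Pt)
    (h : ∀ n : ℤ, dist ((G.toEquiv ^ n) x) ((G.toEquiv ^ n) y) ≤ 1) : x = y := by
  have h0 : dist x y ≤ 1 := by simpa using h 0
  have hm : x.m = y.m := m_eq_of_dist_lt_two x y (by linarith)
  rcases x with ⟨mx, ix⟩; rcases y with ⟨my, iy⟩
  simp only at hm; subst hm
  by_contra hne
  have hij : ix ≠ iy := fun h' => hne (by rw [h'])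
  have huij : u ix ≠ u iy := fun h' => hij (u_inj h')
  rcases huij.lt_or_gt with h' | h'
  · obtain ⟨n, hn⟩ := no_big mx iy ix h'
    have h5 := h n
    rw [dist_comm] at h5
    linarith
  · obtain ⟨n, hn⟩ := no_big mx ix iy h'
    linarith [h n]

/-- `Pt` is not compact. -/
lemma Pt_noncompact : ¬ CompactSpace Pt := by
  intro hcomp
  obtain ⟨C, hC⟩ := Metric.isBounded_iff.1 (isCompact_univ (X := Pt)).isBounded
  set k : ℕ := ⌈C⌉₊ + 1 with hk
  have h1 := hC (Set.mem_univ (⟨0, 0⟩ : Pt)) (Set.mem_univ (⟨(k:ℤ), 0⟩ : Pt))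
  have h2 := dist_fst_le (⟨0, 0⟩ : Pt) ⟨(k:ℤ), 0⟩
  simp only at h2
  have h3 : |2 * ((0:ℤ):ℝ) - 2 * ((k:ℤ):ℝ)| = 2 * (k:ℝ) := by
    have hk0 : (0:ℝ) ≤ (k:ℝ) := Nat.cast_nonneg k
    push_cast
    rw [abs_of_nonpos (by linarith)]
    ring
  rw [h3] at h2
  have h4 : C ≤ (⌈C⌉₊ : ℝ) := Nat.le_ceil _
  have h5 : ((⌈C⌉₊ : ℝ)) + 1 ≤ (k:ℝ) := by rw [hk]; push_cast; linarith
  linarith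

lemma G_not_asymp :
    ¬ ∃ c > (0:ℝ), ∀ x y : Pt, (∀ n : ℕ, dist ((⇑G)^[n] x) ((⇑G)^[n] y) ≤ c) →
      Tendsto (fun n : ℕ => dist ((⇑G)^[n] x) ((⇑G)^[n] y)) atTop (𝓝 0) := by
  rintro ⟨c, hc, hA⟩
  set i : ℕ := ⌈2 / c⌉₊ + 1 with hi
  set m0 : ℕ := ⌈2 * Real.exp 1 / c⌉₊ + 1 with hm0
  have hipos : (0:ℝ) < (i:ℝ) := by exact_mod_cast Nat.succ_pos _
  have hui_pos : 0 < u i := inv_pos.2 hipos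
  -- `u i ≤ c / 2`
  have hH : 2 / c ≤ (i:ℝ) := le_trans (Nat.le_ceil _) (by rw [hi]; push_cast; linarith)
  have h2c : 2 ≤ (i:ℝ) * c := by
    have := mul_le_mul_of_nonneg_right hH hc.le
    rwa [div_mul_cancel₀ _ hc.ne'] at this
  have hui : u i ≤ c / 2 := by
    have hprod : (i:ℝ) * (i:ℝ)⁻¹ = 1 := mul_inv_cancel₀ hipos.ne'
    have hinv : (0:ℝ) ≤ (i:ℝ)⁻¹ := inv_nonneg.2 hipos.le
    have := mul_nonneg (sub_nonneg.2 h2c) hinv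
    show (i:ℝ)⁻¹ ≤ c / 2
    nlinarith
  -- `exp (-m0) * exp 1 ≤ c / 2`
  have hM : 2 * Real.exp 1 / c ≤ (m0:ℝ) :=
    le_trans (Nat.le_ceil _) (by rw [hm0]; push_cast; linarith)
  have hE : 2 * Real.exp 1 ≤ (m0:ℝ) * c := by
    have := mul_le_mul_of_nonneg_right hM hc.le
    rwa [div_mul_cancel₀ _ hc.ne'] at this
  have hEm : (m0:ℝ) + 1 ≤ Real.exp (m0:ℝ) := Real.add_one_le_exp _
  have hEc : 2 * Real.exp 1 ≤ Real.exp (m0:ℝ) * c := by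
    have h1 : (m0:ℝ) * c ≤ Real.exp (m0:ℝ) * c :=
      mul_le_mul_of_nonneg_right (by linarith) hc.le
    linarith
  have hm0bound : Real.exp (-(m0:ℝ)) * Real.exp 1 ≤ c / 2 := by
    have hEpos : (0:ℝ) < Real.exp (m0:ℝ) := Real.exp_pos _
    have hinv : (0:ℝ) ≤ (Real.exp (m0:ℝ))⁻¹ := inv_nonneg.2 hEpos.le
    have hprod : Real.exp (m0:ℝ) * (Real.exp (m0:ℝ))⁻¹ = 1 := mul_inv_cancel₀ hEpos.ne'
    rw [Real.exp_neg]
    have := mul_nonneg (sub_nonneg.2 hEc) hinv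
    nlinarith
  -- the two points
  have hu0 : u 0 ≤ u i := by rw [u_zero]; exact hui_pos.le
  have hexpui : Real.exp (u i) ≤ Real.exp 1 := Real.exp_le_exp.2 (u_le_one i)
  have hexpui1 : 1 ≤ Real.exp (u i) := by
    rw [show (1:ℝ) = Real.exp 0 from (Real.exp_zero).symm]
    exact Real.exp_le_exp.2 (u_nonneg i)
  have hdist : ∀ n : ℕ, dist ((⇑G)^[n] (⟨(m0:ℤ), i⟩ : Pt)) ((⇑G)^[n] (⟨(m0:ℤ), 0⟩ : Pt)) =
      Real.exp (-((m0:ℝ) + n)) * (Real.exp (u i) - 1) + u i := by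
    intro n
    rw [G_iter_apply, G_iter_apply]
    simp only
    rw [dist_same _ _ _ hu0, u_zero, Real.exp_zero]
    push_cast
    ring
  have hforward : ∀ n : ℕ, dist ((⇑G)^[n] (⟨(m0:ℤ), i⟩ : Pt)) ((⇑G)^[n] (⟨(m0:ℤ), 0⟩ : Pt)) ≤ c := by
    intro n
    rw [hdist n]
    have h1 : Real.exp (-((m0:ℝ) + n)) ≤ Real.exp (-(m0:ℝ)) :=
      Real.exp_le_exp.2 (by have : (0:ℝ) ≤ n := Nat.cast_nonneg n; linarith)
    have h2 : Real.exp (-((m0:ℝ) + n)) * (Real.exp (u i) - 1) ≤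
        Real.exp (-(m0:ℝ)) * Real.exp 1 := by
      have := Real.exp_pos (-((m0:ℝ) + n))
      have := Real.exp_pos (-(m0:ℝ))
      nlinarith
    linarith
  have hT := hA _ _ hforward
  have hlow : ∀ n : ℕ, u i ≤ dist ((⇑G)^[n] (⟨(m0:ℤ), i⟩ : Pt)) ((⇑G)^[n] (⟨(m0:ℤ), 0⟩ : Pt)) := by
    intro n
    rw [hdist n]
    nlinarith [Real.exp_pos (-((m0:ℝ) + n))]
  obtain ⟨n, hn⟩ := (hT.eventually (gt_mem_nhds hui_pos)).exists
  exact absurd (hlow n) (not_le.2 hn)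

end ExpEx
end ExpEx

/-- There is a non-compact metric space and an expansive homeomorphism (with constant 1) which is
weak bi-asymptotically expansive but not asymptotically expansive, hence not bi-asymptotically
expansive. -/
theorem exists_expansive_not_biAsympExpansive :
    ∃ (X : Type) (_ : MetricSpace X), ¬ CompactSpace X ∧
      ∃ g : X ≃ₜ X,
        -- g is expansive with expansivity constant 1
        (∀ x y : X, (∀ n : ℤ, dist ((g.toEquiv ^ n) x) ((g.toEquiv ^ n) y) ≤ 1) → x = y) ∧
        -- g is weak bi-asymptotically expansive (with some constant)
        (∃ c > (0 : ℝ), ∀ x y : X, (∀ n : ℤ, dist ((g.toEquiv ^ n) x) ((g.toEquiv ^ n) y) ≤ c) →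
          Tendsto (fun n : ℕ => dist (g^[n] x) (g^[n] y)) atTop (𝓝 0) ∧
          Tendsto (fun n : ℕ => dist (g.symm^[n] x) (g.symm^[n] y)) atTop (𝓝 0)) ∧
        -- g is not asymptotically expansive (with any constant)
        (¬ ∃ c > (0 : ℝ), AsympExpWith (⇑g) c) ∧
        -- hence g is not bi-asymptotically expansive
        (¬ ∃ c > (0 : ℝ), AsympExpWith (⇑g) c ∧ AsympExpWith (⇑g.symm) c) := by
  refine ⟨ExpEx.Pt, inferInstance, ExpEx.Pt_noncompact, ExpEx.G, ExpEx.G_expansive, ?_, ?_, ?_⟩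
  · refine ⟨1, one_pos, fun x y h => ?_⟩
    obtain rfl := ExpEx.G_expansive x y h
    constructor <;> · simp only [dist_self]; exact tendsto_const_nhds
  · rintro ⟨c, hc, hA⟩
    exact ExpEx.G_not_asymp ⟨c, hc, hA⟩
  · rintro ⟨c, hc, hA, _⟩
    exact ExpEx.G_not_asymp ⟨c, hc, hA⟩
end

section
/- A continuous surjection f: X → X of a compact metric space is bi-asymptotically c-expansive if and only if f^k is bi-asymptotically c-expansive for some k ∈ ℕ⁺, if and only if f^k is bi-asymptotically c-expansive for every k ∈ ℕ⁺. -/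
open Filter Topology Function

/-! A `c`-close pair of full `f`-orbits, sampled every `k` steps along each residue class, is a
`c`-close pair of full `f^k`-orbits; so expansivity of `f^k` forces every residue class, hence the
whole sequence of distances, to tend to `0`. Conversely, a full `f^k`-orbit is interpolated into a
full `f`-orbit by applying `f, …, f^(k-1)` between consecutive points, and uniform continuity of
`f, …, f^(k-1)` turns a `δ`-close pair of `f^k`-orbits into a `c`-close pair of interpolations. -/

theorem Nat.tendsto_of_forall_tendsto_mul_add {α : Type*} {k : ℕ} (hk : 0 < k) {g : ℕ → α}
    {l : Filter α} (h : ∀ r < k, Tendsto (fun n => g (k * n + r)) atTop l) :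
    Tendsto g atTop l := by
  intro s hs
  have hall : ∀ᶠ n in atTop, ∀ r : Fin k, g (k * n + r) ∈ s :=
    eventually_all.mpr fun r => h r r.isLt hs
  obtain ⟨N, hN⟩ := eventually_atTop.mp hall
  refine mem_map.mpr (mem_atTop_sets.mpr ⟨k * N, fun n hn => ?_⟩)
  have hdiv : N ≤ n / k := (Nat.le_div_iff_mul_le hk).mpr (by linarith)
  simpa [Nat.div_add_mod] using hN (n / k) hdiv ⟨n % k, Nat.mod_lt n hk⟩

theorem exists_nat_eq_unit_mul_ediv (ε : ℤˣ) (m : ℕ) {k : ℕ} (hk : 0 < k) :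
    ∃ n : ℕ, ε * (m : ℤ) / k = ε * n := by
  have hsign : 0 ≤ ε * (ε * (m : ℤ) / k) := by
    rcases Int.units_eq_one_or ε with rfl | rfl
    · simpa using Int.ediv_nonneg (Int.natCast_nonneg m) (Int.natCast_nonneg k)
    · simpa using Int.ediv_nonpos_of_nonpos_of_neg (by simp) (by omega : (0 : ℤ) < k)
  refine ⟨(ε * (ε * (m : ℤ) / k)).toNat, ?_⟩
  rw [Int.toNat_of_nonneg hsign, ← mul_assoc, ← Units.val_mul, Int.units_mul_self, Units.val_one,
    one_mul]

section

variable {X : Type*} {f : X → X} {k : ℕ} {x : ℤ → X}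

theorem FullOrbit.iterate_apply (hx : FullOrbit f x) (j : ℕ) (m : ℤ) :
    f^[j] (x m) = x (m + j) := by
  induction j with
  | zero => simp
  | succ j ih => rw [Function.iterate_succ_apply', ih, hx]; push_cast; ring_nf

theorem FullOrbit.iterate_comp_mul_add (hx : FullOrbit f x) (k : ℕ) (s : ℤ) :
    FullOrbit f^[k] (fun q => x (k * q + s)) := by
  intro q
  rw [hx.iterate_apply]
  congr 1
  ring

/-- The full `f`-orbit through the points of a full `f^[k]`-orbit `x`, with `x q` at time `k * q`. -/
def interpolate (f : X → X) (k : ℕ) (x : ℤ → X) (m : ℤ) : X :=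
  f^[(m % k).toNat] (x (m / k))

theorem interpolate_mul_add (q : ℤ) {j : ℕ} (hj : j < k) :
    interpolate f k x (k * q + j) = f^[j] (x q) := by
  have hk : (k : ℤ) ≠ 0 := by omega
  have hjk : (j : ℤ) < k := by exact_mod_cast hj
  have hdiv : (k * q + j) / k = q := by
    rw [add_comm, Int.add_mul_ediv_left _ _ hk, Int.ediv_eq_zero_of_lt (by positivity) hjk,
      zero_add]
  have hmod : (k * q + j) % k = j := by
    rw [add_comm, Int.add_mul_emod_self_left, Int.emod_eq_of_lt (by positivity) hjk]
  simp only [interpolate, hdiv, hmod, Int.toNat_natCast]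

theorem interpolate_mul (hk : 0 < k) (q : ℤ) : interpolate f k x (k * q) = x q := by
  simpa using interpolate_mul_add (f := f) (x := x) q hk

theorem interpolate_mul_add_of_le (hk : 0 < k) (hx : FullOrbit f^[k] x) (q : ℤ) {j : ℕ}
    (hj : j ≤ k) : interpolate f k x (k * q + j) = f^[j] (x q) := by
  obtain hj | rfl := hj.lt_or_eq.imp_right Eq.symm
  · exact interpolate_mul_add q hj
  · rw [show (k : ℤ) * q + k = k * (q + 1) by ring, interpolate_mul hk, hx]

theorem fullOrbit_interpolate (hk : 0 < k) (hx : FullOrbit f^[k] x) :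
    FullOrbit f (interpolate f k x) := by
  intro m
  have hmod_nonneg : 0 ≤ m % k := Int.emod_nonneg m (by omega)
  have hmod_lt : m % k < k := Int.emod_lt_of_pos m (by omega)
  obtain ⟨j, hj⟩ : ∃ j : ℕ, m % k = j := ⟨_, (Int.toNat_of_nonneg hmod_nonneg).symm⟩
  have hm : m = k * (m / k) + j := by rw [← hj, Int.mul_ediv_add_emod]
  have hjk : j < k := by omega
  rw [hm, interpolate_mul_add _ hjk, add_assoc, show (j : ℤ) + 1 = (j + 1 : ℕ) by push_cast; rfl,
    interpolate_mul_add_of_le hk hx _ hjk, Function.iterate_succ_apply']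

variable [MetricSpace X] {c : ℝ} {ε : ℤˣ}

/-- One half of `BiAsympCExpWith f c`: the forward half for `ε = 1`, the backward one for
`ε = -1`. -/
def OneSidedAsympExpWith (f : X → X) (c : ℝ) (ε : ℤˣ) : Prop :=
  ∀ x y : ℤ → X, FullOrbit f x → FullOrbit f y →
    (∀ n : ℕ, dist (x (ε * n)) (y (ε * n)) ≤ c) →
    Tendsto (fun n : ℕ => dist (x (ε * n)) (y (ε * n))) atTop (𝓝 0)

theorem biAsympCExpWith_iff_forall_oneSidedAsympExpWith :
    BiAsympCExpWith f c ↔ ∀ ε : ℤˣ, OneSidedAsympExpWith f c ε := by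
  refine ⟨fun ⟨hfwd, hbwd⟩ ε => ?_, fun h => ⟨?_, ?_⟩⟩
  · rcases Int.units_eq_one_or ε with rfl | rfl
    · simpa [OneSidedAsympExpWith] using hfwd
    · simpa [OneSidedAsympExpWith] using hbwd
  · simpa [OneSidedAsympExpWith] using h 1
  · simpa [OneSidedAsympExpWith] using h (-1)

theorem OneSidedAsympExpWith.of_iterate (hk : 0 < k) (h : OneSidedAsympExpWith f^[k] c ε) :
    OneSidedAsympExpWith f c ε := by
  intro x y hx hy hclose
  refine Nat.tendsto_of_forall_tendsto_mul_add hk fun r _ => ?_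
  have htime : ∀ n : ℕ, (ε : ℤ) * (k * n + r : ℕ) = k * (ε * n) + ε * r := fun n => by
    push_cast; ring
  have := h _ _ (hx.iterate_comp_mul_add k (ε * r)) (hy.iterate_comp_mul_add k (ε * r))
    fun n => by simpa only [htime] using hclose (k * n + r)
  simpa only [htime] using this

theorem OneSidedAsympExpWith.iterate (hk : 0 < k) {δ : ℝ}
    (hδ : ∀ a b, dist a b ≤ δ → ∀ j < k, dist (f^[j] a) (f^[j] b) ≤ c)
    (h : OneSidedAsympExpWith f c ε) : OneSidedAsympExpWith f^[k] δ ε := by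
  intro x y hx hy hclose
  have hinterp : ∀ n : ℕ, dist (interpolate f k x (ε * n)) (interpolate f k y (ε * n)) ≤ c := by
    intro n
    obtain ⟨n', hn'⟩ := exists_nat_eq_unit_mul_ediv ε n hk
    refine hδ _ _ ?_ _ ?_
    · rw [hn']; exact hclose n'
    · have := Int.emod_lt_of_pos (ε * (n : ℤ)) (b := k) (by omega)
      omega
  have := (h _ _ (fullOrbit_interpolate hk hx) (fullOrbit_interpolate hk hy) hinterp).comp
    (tendsto_id.const_mul_atTop' hk)
  refine this.congr fun n => ?_
  simp only [Function.comp_apply, id, Nat.cast_mul, mul_left_comm (ε : ℤ), interpolate_mul hk]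

theorem BiAsympCExpansive.of_iterate (hk : 0 < k) (h : BiAsympCExpansive f^[k]) :
    BiAsympCExpansive f := by
  obtain ⟨c, hc, h⟩ := h
  rw [biAsympCExpWith_iff_forall_oneSidedAsympExpWith] at h
  exact ⟨c, hc, biAsympCExpWith_iff_forall_oneSidedAsympExpWith.mpr fun ε => (h ε).of_iterate hk⟩

theorem BiAsympCExpansive.iterate (hf : UniformContinuous f) (h : BiAsympCExpansive f)
    (hk : 0 < k) : BiAsympCExpansive f^[k] := by
  obtain ⟨c, hc, h⟩ := h
  rw [biAsympCExpWith_iff_forall_oneSidedAsympExpWith] at h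
  have hF : UniformContinuous fun a (j : Fin k) => f^[j] a :=
    uniformContinuous_pi.mpr fun j => UniformContinuous.iterate f j hf
  obtain ⟨δ, hδ, hF⟩ := Metric.uniformContinuous_iff_le.mp hF c hc
  refine ⟨δ, hδ, biAsympCExpWith_iff_forall_oneSidedAsympExpWith.mpr fun ε => (h ε).iterate hk ?_⟩
  exact fun a b hab j hj => (dist_le_pi_dist _ _ ⟨j, hj⟩).trans (hF hab)

end

theorem biAsympCExpansive_iterate_iff_general {X : Type*} [MetricSpace X] [CompactSpace X]
    (f : X → X) (hf : Continuous f) :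
    (BiAsympCExpansive f ↔ ∃ k : ℕ, 0 < k ∧ BiAsympCExpansive f^[k]) ∧
    (BiAsympCExpansive f ↔ ∀ k : ℕ, 0 < k → BiAsympCExpansive f^[k]) := by
  have hf := CompactSpace.uniformContinuous_of_continuous hf
  exact ⟨⟨fun h => ⟨1, one_pos, h.iterate hf one_pos⟩, fun ⟨_, hk, h⟩ => h.of_iterate hk⟩,
    ⟨fun h _ hk => h.iterate hf hk, fun h => (h 1 one_pos).of_iterate one_pos⟩⟩

/-- `f` is bi-asymptotically `c`-expansive iff some positive iterate is, iff every positive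
iterate is. -/
theorem biAsympCExpansive_iterate_iff {X : Type*} [MetricSpace X] [CompactSpace X]
    (f : X → X) (hf : Continuous f) (hsurj : Function.Surjective f) :
    (BiAsympCExpansive f ↔ ∃ k : ℕ, 0 < k ∧ BiAsympCExpansive f^[k]) ∧
    (BiAsympCExpansive f ↔ ∀ k : ℕ, 0 < k → BiAsympCExpansive f^[k]) :=
  biAsympCExpansive_iterate_iff_general f hf
end

section
/- Every c-expansive continuous surjection of a compact metric space is bi-asymptotically c-expansive. -/
open Filter Topology Function

/-- Key compactness argument: a sequence of shifted pairs of orbits that stays `c`-close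
along appropriate translates but is `ε`-separated at the shift point contradicts expansivity. -/
lemma aux_expansive_contra {X : Type*} [MetricSpace X] [CompactSpace X]
    (f : X → X) (hf : Continuous f) (c : ℝ)
    (hexp : ∀ x y : ℤ → X, FullOrbit f x → FullOrbit f y →
      (∀ n : ℤ, dist (x n) (y n) ≤ c) → x = y)
    (x y : ℤ → X) (hx : FullOrbit f x) (hy : FullOrbit f y)
    (s : ℕ → ℤ) (ε : ℝ) (hε : 0 < ε)
    (hfar : ∀ k, ε ≤ dist (x (s k)) (y (s k)))
    (hle : ∀ m : ℤ, ∀ᶠ k in atTop, dist (x (s k + m)) (y (s k + m)) ≤ c) : False := by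
  set u : ℕ → (ℤ → X) × (ℤ → X) :=
    fun k => (fun m => x (s k + m), fun m => y (s k + m)) with hu
  obtain ⟨p, -, ψ, hψ, hconv⟩ :=
    isCompact_univ.tendsto_subseq (fun k => (Set.mem_univ (u k)))
  have hψtop : Tendsto ψ atTop atTop := hψ.tendsto_atTop
  have hA : Tendsto (fun k => (u (ψ k)).1) atTop (𝓝 p.1) :=
    (continuous_fst.tendsto p).comp hconv
  have hB : Tendsto (fun k => (u (ψ k)).2) atTop (𝓝 p.2) :=
    (continuous_snd.tendsto p).comp hconv
  have h1 : ∀ m : ℤ, Tendsto (fun k => x (s (ψ k) + m)) atTop (𝓝 (p.1 m)) :=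
    fun m => tendsto_pi_nhds.mp hA m
  have h2 : ∀ m : ℤ, Tendsto (fun k => y (s (ψ k) + m)) atTop (𝓝 (p.2 m)) :=
    fun m => tendsto_pi_nhds.mp hB m
  have horb1 : FullOrbit f p.1 := by
    intro m
    refine tendsto_nhds_unique ((hf.tendsto _).comp (h1 m)) ?_
    exact (h1 (m + 1)).congr fun k => by
      simp only [Function.comp_apply]; rw [hx, add_assoc]
  have horb2 : FullOrbit f p.2 := by
    intro m
    refine tendsto_nhds_unique ((hf.tendsto _).comp (h2 m)) ?_
    exact (h2 (m + 1)).congr fun k => by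
      simp only [Function.comp_apply]; rw [hy, add_assoc]
  have hdist : ∀ m : ℤ, dist (p.1 m) (p.2 m) ≤ c := by
    intro m
    exact le_of_tendsto ((h1 m).dist (h2 m)) (hψtop.eventually (hle m))
  have heq := hexp p.1 p.2 horb1 horb2 hdist
  have hge : ε ≤ dist (p.1 0) (p.2 0) := by
    refine ge_of_tendsto ((h1 0).dist (h2 0)) (Filter.Eventually.of_forall fun k => ?_)
    simpa using hfar (ψ k)
  rw [heq] at hge
  simp at hge
  linarith

/-- Every `c`-expansive continuous surjection of a compact metric space is bi-asymptotically
`c`-expansive. -/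
theorem biAsympCExpansive_of_cExpansive {X : Type*} [MetricSpace X] [CompactSpace X]
    (f : X → X) (hf : Continuous f) (hsurj : Function.Surjective f)
    (c : ℝ) (hc : 0 < c)
    (hexp : ∀ x y : ℤ → X, FullOrbit f x → FullOrbit f y →
      (∀ n : ℤ, dist (x n) (y n) ≤ c) → x = y) :
    BiAsympCExpansive f := by
  refine ⟨c, hc, ?_, ?_⟩
  · intro x y hx hy hb
    by_contra hT
    obtain ⟨ε, hε, hfreq⟩ : ∃ ε > 0, ∃ᶠ n : ℕ in atTop, ε ≤ dist (x (n : ℤ)) (y (n : ℤ)) := by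
      by_contra hcon
      push_neg at hcon
      apply hT
      rw [Metric.tendsto_atTop]
      intro ε hε
      have h2 := hcon ε hε
      simp only [← not_le] at h2
      rw [Filter.eventually_atTop] at h2
      obtain ⟨N, hN⟩ := h2
      refine ⟨N, fun n hn => ?_⟩
      have hlt : dist (x n) (y n) < ε := not_le.mp (hN n hn)
      rw [Real.dist_eq, sub_zero, abs_of_nonneg dist_nonneg]
      exact hlt
    obtain ⟨φ, hφ, hfar⟩ := Filter.extraction_of_frequently_atTop hfreq
    refine aux_expansive_contra f hf c hexp x y hx hy (fun k => (φ k : ℤ)) ε hε hfar ?_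
    intro m
    filter_upwards [Filter.eventually_ge_atTop m.natAbs] with k hk
    have hk2 : (m.natAbs : ℤ) ≤ (φ k : ℤ) := by exact_mod_cast le_trans hk (hφ.le_apply)
    have hj : 0 ≤ (φ k : ℤ) + m := by
      omega
    have := hb ((φ k : ℤ) + m).toNat
    rwa [Int.toNat_of_nonneg hj] at this
  · intro x y hx hy hb
    by_contra hT
    obtain ⟨ε, hε, hfreq⟩ : ∃ ε > 0, ∃ᶠ n : ℕ in atTop,
        ε ≤ dist (x (-(n : ℤ))) (y (-(n : ℤ))) := by
      by_contra hcon
      push_neg at hcon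
      apply hT
      rw [Metric.tendsto_atTop]
      intro ε hε
      have h2 := hcon ε hε
      simp only [← not_le] at h2
      rw [Filter.eventually_atTop] at h2
      obtain ⟨N, hN⟩ := h2
      refine ⟨N, fun n hn => ?_⟩
      have hlt := not_le.mp (hN n hn)
      rw [Real.dist_eq, sub_zero, abs_of_nonneg dist_nonneg]
      exact hlt
    obtain ⟨φ, hφ, hfar⟩ := Filter.extraction_of_frequently_atTop hfreq
    refine aux_expansive_contra f hf c hexp x y hx hy (fun k => -(φ k : ℤ)) ε hε hfar ?_
    intro m
    filter_upwards [Filter.eventually_ge_atTop m.natAbs] with k hk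
    have hk2 : (m.natAbs : ℤ) ≤ (φ k : ℤ) := by exact_mod_cast le_trans hk (hφ.le_apply)
    have hj : -(φ k : ℤ) + m ≤ 0 := by
      omega
    have := hb (-(-(φ k : ℤ) + m)).toNat
    rw [Int.toNat_of_nonneg (by omega)] at this
    simpa using this
end

section
/- The map f: [0,1] → [0,1], f(x) = x², is bi-asymptotically c-expansive (and bi-asymptotically expansive) with any constant 0 < c < 1/2, but f is not expansive, not positively expansive, and not c-expansive. -/
open Filter Topology Function

/-- The squaring map on `[0,1]`. -/
def sq01 : Set.Icc (0 : ℝ) 1 → Set.Icc (0 : ℝ) 1 :=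
  fun x => ⟨x.1 ^ 2, ⟨by positivity, by nlinarith [x.2.1, x.2.2]⟩⟩


private lemma sq01_val (p : Set.Icc (0:ℝ) 1) : (sq01 p).1 = p.1 ^ 2 := rfl

private lemma sq01_iter_val (p : Set.Icc (0:ℝ) 1) (n : ℕ) :
    (sq01^[n] p).1 = p.1 ^ (2 ^ n) := by
  induction n with
  | zero => simp
  | succ n ih =>
    rw [Function.iterate_succ_apply', sq01_val, ih, ← pow_mul, ← pow_succ]

private lemma orbit_fwd (x : ℤ → Set.Icc (0:ℝ) 1) (hx : FullOrbit sq01 x) :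
    ∀ n : ℕ, x (n : ℤ) = sq01^[n] (x 0) := by
  intro n
  induction n with
  | zero => simp
  | succ n ih =>
    have hcast : ((n + 1 : ℕ) : ℤ) = (n : ℤ) + 1 := by push_cast; ring
    rw [hcast, ← hx n, Function.iterate_succ_apply', ih]

private lemma orbit_bwd (x : ℤ → Set.Icc (0:ℝ) 1) (hx : FullOrbit sq01 x) :
    ∀ n : ℕ, (x (-(n : ℤ))).1 = Real.sqrt^[n] (x 0).1 := by
  intro n
  induction n with
  | zero => simp
  | succ n ih =>
    have h1 : sq01 (x (-((n : ℤ) + 1))) = x (-(n : ℤ)) := by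
      have := hx (-((n : ℤ) + 1))
      rwa [show -((n : ℤ) + 1) + 1 = -(n : ℤ) by ring] at this
    have h2 : (x (-(n : ℤ))).1 = (x (-((n : ℤ) + 1))).1 ^ 2 := by rw [← h1]; rfl
    have h3 : Real.sqrt ((x (-(n : ℤ))).1) = (x (-((n : ℤ) + 1))).1 := by
      rw [h2, Real.sqrt_sq (x _).2.1]
    rw [show (-(↑(n + 1) : ℤ)) = -((n : ℤ) + 1) by push_cast; ring, ← h3, ih]
    exact (Function.iterate_succ_apply' Real.sqrt n _).symm

private lemma sqrt_iter_rpow (v : ℝ) (hv : 0 ≤ v) (n : ℕ) :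
    Real.sqrt^[n] v = v ^ ((1/2 : ℝ) ^ n) := by
  induction n with
  | zero => simp
  | succ n ih =>
    rw [Function.iterate_succ_apply', ih, Real.sqrt_eq_rpow, ← Real.rpow_mul hv,
      ← pow_succ]

private lemma tendsto_sqrt_iter (v : ℝ) (h0 : 0 < v) :
    Tendsto (fun n : ℕ => Real.sqrt^[n] v) atTop (𝓝 1) := by
  have h : Tendsto (fun n : ℕ => v ^ ((1/2 : ℝ) ^ n)) atTop (𝓝 (v ^ (0 : ℝ))) :=
    (Real.continuousAt_const_rpow h0.ne').tendsto.comp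
      (tendsto_pow_atTop_nhds_zero_of_lt_one (by norm_num) (by norm_num))
  rw [Real.rpow_zero] at h
  exact h.congr fun n => (sqrt_iter_rpow v h0.le n).symm

private lemma tendsto_pow_two_pow (v : ℝ) (h0 : 0 ≤ v) (h1 : v < 1) :
    Tendsto (fun n : ℕ => v ^ (2 ^ n)) atTop (𝓝 0) :=
  squeeze_zero (fun n => pow_nonneg h0 _)
    (fun n => pow_le_pow_of_le_one h0 h1.le (Nat.lt_two_pow_self (n := n)).le)
    (tendsto_pow_atTop_nhds_zero_of_lt_one h0 h1)

private lemma exists_close_orbits (c : ℝ) (hc : 0 < c) :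
    ∃ x y : ℤ → Set.Icc (0:ℝ) 1, FullOrbit sq01 x ∧ FullOrbit sq01 y ∧
      (∀ n : ℤ, dist (x n) (y n) ≤ c) ∧ x 0 ≠ y 0 := by
  set s : ℝ := max (1 - c) (1/2) with hs
  have hs0 : (0:ℝ) < s := lt_of_lt_of_le (by norm_num) (le_max_right _ _)
  have hs1 : s < 1 := max_lt (by linarith) (by norm_num)
  have hsc : 1 - s ≤ c := by
    have := le_max_left (1 - c) (1/2); simp only [← hs] at this; linarith
  have he : ∀ n : ℤ, (0:ℝ) < (2:ℝ) ^ n := fun n => zpow_pos (by norm_num) n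
  have hmem : ∀ e : ℝ, 0 < e → ((1/2 : ℝ) ^ e) ∈ Set.Icc (0:ℝ) 1 := fun e hepos =>
    ⟨Real.rpow_nonneg (by norm_num) e, Real.rpow_le_one (by norm_num) (by norm_num) hepos.le⟩
  refine ⟨fun n => ⟨(1/2 : ℝ) ^ ((2:ℝ) ^ n), hmem _ (he n)⟩,
    fun n => ⟨(1/2 : ℝ) ^ (s * (2:ℝ) ^ n), hmem _ (mul_pos hs0 (he n))⟩, ?_, ?_, ?_, ?_⟩
  · intro n
    apply Subtype.ext
    show ((1/2 : ℝ) ^ ((2:ℝ) ^ n)) ^ (2 : ℕ) = (1/2 : ℝ) ^ ((2:ℝ) ^ (n + 1))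
    rw [← Real.rpow_natCast ((1/2 : ℝ) ^ ((2:ℝ) ^ n)) 2,
      ← Real.rpow_mul (by norm_num : (0:ℝ) ≤ 1/2)]
    congr 1
    rw [zpow_add_one₀ (two_ne_zero : (2:ℝ) ≠ 0)]
    norm_num
  · intro n
    apply Subtype.ext
    show ((1/2 : ℝ) ^ (s * (2:ℝ) ^ n)) ^ (2 : ℕ) = (1/2 : ℝ) ^ (s * (2:ℝ) ^ (n + 1))
    rw [← Real.rpow_natCast ((1/2 : ℝ) ^ (s * (2:ℝ) ^ n)) 2,
      ← Real.rpow_mul (by norm_num : (0:ℝ) ≤ 1/2)]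
    congr 1
    rw [zpow_add_one₀ (two_ne_zero : (2:ℝ) ≠ 0)]
    push_cast; ring
  · intro n
    rw [Subtype.dist_eq, Real.dist_eq]
    have ht0 : (0:ℝ) ≤ (1/2 : ℝ) ^ ((2:ℝ) ^ n) := Real.rpow_nonneg (by norm_num) _
    have ht1 : (1/2 : ℝ) ^ ((2:ℝ) ^ n) ≤ 1 := (hmem _ (he n)).2
    have hts : (1/2 : ℝ) ^ (s * (2:ℝ) ^ n) = ((1/2 : ℝ) ^ ((2:ℝ) ^ n)) ^ s := by
      rw [mul_comm, Real.rpow_mul (by norm_num : (0:ℝ) ≤ 1/2)]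
    have hle : (1/2 : ℝ) ^ ((2:ℝ) ^ n) ≤ (1/2 : ℝ) ^ (s * (2:ℝ) ^ n) :=
      Real.rpow_le_rpow_of_exponent_ge (by norm_num) (by norm_num)
        (by nlinarith [he n])
    have young : ((1/2 : ℝ) ^ ((2:ℝ) ^ n)) ^ s ≤
        s * ((1/2 : ℝ) ^ ((2:ℝ) ^ n)) + (1 - s) := by
      have h2 : ((1/2 : ℝ) ^ ((2:ℝ) ^ n)) ^ s * (1:ℝ) ^ (1 - s) ≤
          s * ((1/2 : ℝ) ^ ((2:ℝ) ^ n)) + (1 - s) * 1 :=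
        Real.geom_mean_le_arith_mean2_weighted hs0.le (by linarith) ht0
          zero_le_one (by ring)
      rw [Real.one_rpow, mul_one, mul_one] at h2
      exact h2
    rw [abs_sub_comm, abs_of_nonneg (sub_nonneg.mpr hle), hts]
    nlinarith [mul_nonneg (sub_nonneg.mpr hs1.le) ht0]
  · intro hEq
    have hv := congrArg Subtype.val hEq
    simp only [zpow_zero, mul_one, Real.rpow_one] at hv
    have hlt : (1/2 : ℝ) ^ (1:ℝ) < (1/2 : ℝ) ^ s :=
      Real.rpow_lt_rpow_of_exponent_gt (by norm_num) (by norm_num) hs1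
    rw [Real.rpow_one] at hlt
    exact absurd hv (ne_of_lt hlt)

/-- `x ↦ x²` on `[0,1]` is bi-asymptotically `c`-expansive with any constant `0 < c < 1/2`,
but it is not positively expansive, not `c`-expansive, and not expansive. -/
theorem sq01_biAsympCExp_not_expansive :
    (∀ c : ℝ, 0 < c → c < 1 / 2 → BiAsympCExpWith sq01 c) ∧
    -- not positively expansive
    (¬ ∃ c > (0 : ℝ), ∀ x y : Set.Icc (0 : ℝ) 1,
        (∀ n : ℕ, dist (sq01^[n] x) (sq01^[n] y) ≤ c) → x = y) ∧
    -- not c-expansive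
    (¬ ∃ c > (0 : ℝ), ∀ x y : ℤ → Set.Icc (0 : ℝ) 1, FullOrbit sq01 x → FullOrbit sq01 y →
        (∀ n : ℤ, dist (x n) (y n) ≤ c) → x = y) ∧
    -- not expansive (via full orbits, since `sq01` is a homeomorphism)
    (¬ ∃ c > (0 : ℝ), ∀ x y : ℤ → Set.Icc (0 : ℝ) 1, FullOrbit sq01 x → FullOrbit sq01 y →
        (∀ n : ℤ, dist (x n) (y n) ≤ c) → x 0 = y 0)  := by
  refine ⟨?_, ?_, ?_, ?_⟩
  · -- bi-asymptotic c-expansiveness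
    intro c hc hc2
    constructor
    · intro x y hx hy h
      have key : ∀ n : ℕ, dist (x n) (y n) = |(x 0).1 ^ (2^n) - (y 0).1 ^ (2^n)| := by
        intro n
        rw [orbit_fwd x hx n, orbit_fwd y hy n, Subtype.dist_eq, sq01_iter_val,
          sq01_iter_val, Real.dist_eq]
      rcases lt_or_eq_of_le (x 0).2.2 with hxa | hxa <;>
        rcases lt_or_eq_of_le (y 0).2.2 with hyb | hyb
      · -- both < 1
        apply squeeze_zero (g := fun n : ℕ => (x 0).1 ^ (2^n) + (y 0).1 ^ (2^n))
          (fun n => dist_nonneg)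
        · intro n
          rw [key n]
          have h1 := pow_nonneg (x 0).2.1 (2^n)
          have h2 := pow_nonneg (y 0).2.1 (2^n)
          rw [abs_sub_le_iff]; constructor <;> linarith
        · have := (tendsto_pow_two_pow _ (x 0).2.1 hxa).add
            (tendsto_pow_two_pow _ (y 0).2.1 hyb)
          simpa using this
      · -- x < 1, y = 1 : impossible
        exfalso
        obtain ⟨N, hN⟩ := ((tendsto_pow_two_pow _ (x 0).2.1 hxa).eventually
          (gt_mem_nhds (by linarith : (0:ℝ) < 1 - c))).exists
        have h1 := h N
        rw [key N, hyb, one_pow] at h1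
        have h2 := le_abs_self (1 - (x 0).1 ^ (2^N))
        rw [abs_sub_comm] at h1
        linarith
      · -- x = 1, y < 1 : impossible
        exfalso
        obtain ⟨N, hN⟩ := ((tendsto_pow_two_pow _ (y 0).2.1 hyb).eventually
          (gt_mem_nhds (by linarith : (0:ℝ) < 1 - c))).exists
        have h1 := h N
        rw [key N, hxa, one_pow] at h1
        have h2 := le_abs_self (1 - (y 0).1 ^ (2^N))
        linarith
      · -- both = 1
        have hz : ∀ n : ℕ, dist (x n) (y n) = 0 := by
          intro n; rw [key n, hxa, hyb, one_pow, sub_self, abs_zero]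
        exact tendsto_const_nhds.congr fun n => (hz n).symm
    · intro x y hx hy h
      have key : ∀ n : ℕ, dist (x (-(n:ℤ))) (y (-(n:ℤ))) =
          |Real.sqrt^[n] (x 0).1 - Real.sqrt^[n] (y 0).1| := by
        intro n
        rw [Subtype.dist_eq, orbit_bwd x hx n, orbit_bwd y hy n, Real.dist_eq]
      rcases lt_or_eq_of_le (x 0).2.1 with hxa | hxa <;>
        rcases lt_or_eq_of_le (y 0).2.1 with hyb | hyb
      · -- both > 0
        have h3 : Tendsto (fun n : ℕ => |Real.sqrt^[n] (x 0).1 -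
            Real.sqrt^[n] (y 0).1|) atTop (𝓝 0) := by
          simpa using ((tendsto_sqrt_iter _ hxa).sub (tendsto_sqrt_iter _ hyb)).abs
        exact h3.congr fun n => (key n).symm
      · -- x > 0, y = 0
        exfalso
        obtain ⟨N, hN⟩ := ((tendsto_sqrt_iter _ hxa).eventually
          (lt_mem_nhds (show (1/2:ℝ) < 1 by norm_num))).exists
        have h1 := h N
        have hz : Real.sqrt^[N] (y 0).1 = 0 := by
          rw [← hyb]; exact Function.iterate_fixed Real.sqrt_zero N
        have hnn : 0 ≤ Real.sqrt^[N] (x 0).1 := by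
          rw [sqrt_iter_rpow _ (x 0).2.1]; exact Real.rpow_nonneg (x 0).2.1 _
        rw [key N, hz, sub_zero, abs_of_nonneg hnn] at h1
        linarith
      · -- x = 0, y > 0
        exfalso
        obtain ⟨N, hN⟩ := ((tendsto_sqrt_iter _ hyb).eventually
          (lt_mem_nhds (show (1/2:ℝ) < 1 by norm_num))).exists
        have h1 := h N
        have hz : Real.sqrt^[N] (x 0).1 = 0 := by
          rw [← hxa]; exact Function.iterate_fixed Real.sqrt_zero N
        have hnn : 0 ≤ Real.sqrt^[N] (y 0).1 := by
          rw [sqrt_iter_rpow _ (y 0).2.1]; exact Real.rpow_nonneg (y 0).2.1 _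
        rw [key N, hz, zero_sub, abs_neg, abs_of_nonneg hnn] at h1
        linarith
      · -- both = 0
        have hz : ∀ n : ℕ, dist (x (-(n:ℤ))) (y (-(n:ℤ))) = 0 := by
          intro n
          rw [key n, ← hxa, ← hyb, Function.iterate_fixed Real.sqrt_zero n,
            sub_self, abs_zero]
        exact tendsto_const_nhds.congr fun n => (hz n).symm
  · -- not positively expansive
    rintro ⟨c, hc, H⟩
    set m : ℝ := min c 1 with hm
    have hm0 : 0 < m := lt_min hc one_pos
    have hm1 : m ≤ 1 := min_le_right _ _
    have key := H ⟨0, by norm_num⟩ ⟨m, hm0.le, hm1⟩ ?_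
    · have := congrArg Subtype.val key
      simp only at this
      exact absurd this.symm hm0.ne'
    · intro n
      rw [Subtype.dist_eq, sq01_iter_val, sq01_iter_val, Real.dist_eq]
      show |(0:ℝ) ^ (2^n) - m ^ (2^n)| ≤ c
      rw [zero_pow (Nat.two_pow_pos n).ne', zero_sub, abs_neg,
        abs_of_nonneg (pow_nonneg hm0.le _)]
      calc m ^ (2^n) ≤ m := pow_le_of_le_one hm0.le hm1 (Nat.two_pow_pos n).ne'
        _ ≤ c := min_le_left _ _
  · -- not c-expansive
    rintro ⟨c, hc, H⟩
    obtain ⟨x, y, hx, hy, hb, hne⟩ := exists_close_orbits c hc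
    exact hne (congrFun (H x y hx hy hb) 0)
  · -- not expansive
    rintro ⟨c, hc, H⟩
    obtain ⟨x, y, hx, hy, hb, hne⟩ := exists_close_orbits c hc
    exact hne (H x y hx hy hb)
end

section
/- If f: X → X is a bi-asymptotically c-expansive continuous surjection of a compact metric space with the shadowing property, then CR(f) = Ω(f) = closure of Per(f). -/
open Filter Topology Function

lemma exists_fullOrbit {X : Type*} (f : X → X) (hsurj : Function.Surjective f) (y : X) :
    ∃ Y : ℤ → X, FullOrbit f Y ∧ ∀ n : ℕ, Y n = f^[n] y := by
  classical
  set g := Function.surjInv hsurj with hg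
  have hfg : ∀ x, f (g x) = x := fun x => Function.surjInv_eq hsurj x
  refine ⟨fun n => if 0 ≤ n then f^[n.toNat] y else g^[(-n).toNat] y, ?_, ?_⟩
  · intro n
    rcases lt_trichotomy n (-1) with h | h | h
    · have h1 : ¬ (0 ≤ n) := by omega
      have h2 : ¬ (0 ≤ n + 1) := by omega
      simp only [h1, h2, if_false]
      have h3 : (-n).toNat = (-(n+1)).toNat + 1 := by omega
      rw [h3, Function.iterate_succ_apply', hfg]
    · subst h
      have h1 : ¬ (0 ≤ (-1 : ℤ)) := by omega
      simp only [h1, if_false]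
      norm_num [hfg]
    · have h1 : 0 ≤ n := by omega
      have h2 : 0 ≤ n + 1 := by omega
      simp only [h1, h2, if_true]
      have h3 : (n+1).toNat = n.toNat + 1 := by omega
      rw [h3, Function.iterate_succ_apply']
  · intro n; simp

lemma nonwandering_isClosed {X : Type*} [MetricSpace X] (f : X → X) :
    IsClosed {x | NonWandering f x} := by
  rw [← isOpen_compl_iff]
  rw [isOpen_iff_mem_nhds]
  intro x hx
  simp only [Set.mem_compl_iff, Set.mem_setOf_eq, NonWandering] at hx
  push_neg at hx
  obtain ⟨U, hU, hxU, hn⟩ := hx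
  refine Filter.mem_of_superset (hU.mem_nhds hxU) ?_
  intro y hy hNW
  obtain ⟨n, hn0, hne⟩ := hNW U hU hy
  exact (Set.nonempty_iff_ne_empty.mp hne) (hn n hn0)

lemma per_subset_nonwandering {X : Type*} [MetricSpace X] (f : X → X) :
    Function.periodicPts f ⊆ {x | NonWandering f x} := by
  intro x hx
  obtain ⟨n, hn, hper⟩ := hx
  intro U hU hxU
  exact ⟨n, hn, x, ⟨x, hxU, hper⟩, hxU⟩

lemma nonwandering_subset_cr {X : Type*} [MetricSpace X] (f : X → X) (hf : Continuous f) :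
    {x | NonWandering f x} ⊆ {x | ChainRecurrent f x} := by
  intro x hx α hα
  obtain ⟨δ, hδ, hδc⟩ := Metric.continuous_iff.mp hf x (α/2) (by linarith)
  set δ' := min δ (α/2) with hδ'
  have hδ'0 : 0 < δ' := lt_min hδ (by linarith)
  obtain ⟨n, hn0, v, ⟨u, huU, huv⟩, hvU⟩ := hx (Metric.ball x δ') Metric.isOpen_ball
    (Metric.mem_ball_self hδ'0)
  classical
  set z : ℕ → X := fun i => if i = 0 ∨ n ≤ i then x else f^[i] u with hz
  have hz0 : z 0 = x := if_pos (Or.inl rfl)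
  have hzn : z n = x := if_pos (Or.inr le_rfl)
  have hzmid : ∀ i, 0 < i → i < n → z i = f^[i] u := by
    intro i h1 h2
    simp only [hz]
    rw [if_neg (by omega)]
  have hux : dist u x < δ' := Metric.mem_ball.mp huU
  have hvx : dist v x < δ' := Metric.mem_ball.mp hvU
  have hfufx : dist (f u) (f x) < α/2 := hδc u (lt_of_lt_of_le hux (min_le_left _ _))
  have hδα : δ' ≤ α/2 := min_le_right _ _
  refine ⟨n, z, hn0, hz0, hzn, ?_⟩
  intro i hi
  rcases Nat.eq_zero_or_pos i with rfl | hi1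
  · rw [hz0, zero_add]
    rcases eq_or_lt_of_le (show 1 ≤ n from hn0) with h1 | h1
    · -- n = 1
      have hz1 : z 1 = x := by rw [show (1:ℕ) = n by omega]; exact hzn
      rw [hz1]
      have hfu : f u = v := by rw [← huv, ← h1]; simp
      refine le_of_lt ?_
      calc dist (f x) x ≤ dist (f x) (f u) + dist (f u) x := dist_triangle _ _ _
        _ < α/2 + δ' := by
            refine add_lt_add (by rw [dist_comm]; exact hfufx) ?_
            rw [hfu]; exact hvx
        _ ≤ α := by linarith
    · rw [hzmid 1 one_pos h1]
      simp only [Function.iterate_one]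
      rw [dist_comm]
      linarith
  · rw [hzmid i hi1 hi]
    rcases eq_or_lt_of_le (Nat.succ_le_of_lt hi) with h2 | h2
    · -- i + 1 = n
      have : z (i+1) = x := by rw [show i+1 = n by omega]; exact hzn
      rw [this, ← Function.iterate_succ_apply' f i u, h2, huv]
      linarith
    · rw [hzmid (i+1) (Nat.succ_pos i) h2, ← Function.iterate_succ_apply' f i u]
      simp [Nat.succ_eq_add_one, hα.le]

lemma cr_subset_closure_per {X : Type*} [MetricSpace X] [CompactSpace X]
    (f : X → X) (hf : Continuous f) (hsurj : Function.Surjective f)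
    (hexp : BiAsympCExpansive f) (hsh : Shadowing f) :
    {x | ChainRecurrent f x} ⊆ closure (Function.periodicPts f) := by
  obtain ⟨c, hc, hexp1, -⟩ := hexp
  intro x hx
  rw [Metric.mem_closure_iff]
  intro ε' hε'
  set ε := min ε' c / 2 with hε
  have hε0 : 0 < ε := by
    have : 0 < min ε' c := lt_min hε' hc
    positivity
  obtain ⟨δ, hδ0, hδ⟩ := hsh ε hε0
  obtain ⟨p, z, hp0, hz0, hzp, hchain⟩ := hx δ hδ0
  set u : ℕ → X := fun n => z (n % p) with hu
  have humod : ∀ n : ℕ, u (n + p) = u n := by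
    intro n; simp only [hu, Nat.add_mod_right]
  have hps : ∀ n, dist (f (u n)) (u (n+1)) ≤ δ := by
    intro n
    have hr : n % p < p := Nat.mod_lt _ hp0
    have hmm : (n % p + 1) % p = (n + 1) % p := Nat.mod_add_mod n p 1
    rcases eq_or_lt_of_le (Nat.succ_le_of_lt hr) with h | h
    · have h2 : n % p + 1 = p := by omega
      have h1 : (n + 1) % p = 0 := by rw [← hmm, h2, Nat.mod_self]
      simp only [hu, h1, hz0, ← hzp]
      have := hchain (n % p) hr
      rwa [h2] at this
    · have h1 : (n + 1) % p = n % p + 1 := by rw [← hmm, Nat.mod_eq_of_lt h]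
      simp only [hu, h1]
      exact hchain (n % p) hr
  obtain ⟨y, hy⟩ := hδ u hps
  obtain ⟨Y, hYf, hYs⟩ := exists_fullOrbit f hsurj y
  set Z : ℤ → X := fun n => Y (n + p) with hZdef
  have hZf : FullOrbit f Z := by
    intro n
    have := hYf (n + p)
    simpa [hZdef, add_right_comm] using this
  have hZs : ∀ n : ℕ, Z n = f^[n + p] y := by
    intro n
    have := hYs (n + p)
    simp only [hZdef]
    rw [show ((n : ℤ) + (p : ℤ)) = ((n + p : ℕ) : ℤ) by push_cast; ring, this]
  have hbound : ∀ n : ℕ, dist (Y n) (Z n) ≤ c := by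
    intro n
    rw [hYs n, hZs n]
    calc dist (f^[n] y) (f^[n + p] y)
        ≤ dist (f^[n] y) (u n) + dist (u n) (f^[n + p] y) := dist_triangle _ _ _
      _ ≤ ε + ε := by
          refine add_le_add (hy n) ?_
          rw [dist_comm, ← humod n]
          exact hy (n + p)
      _ ≤ c := by rw [hε]; have := min_le_right ε' c; linarith
  have hD := hexp1 Y Z hYf hZf hbound
  have hDy : Tendsto (fun n : ℕ => dist (f^[n] y) (f^[n + p] y)) atTop (𝓝 0) :=
    hD.congr (fun n => by rw [hYs n, hZs n])
  obtain ⟨w, -, φ, hφ, hlim⟩ := isCompact_univ.tendsto_subseq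
    (fun k : ℕ => Set.mem_univ (f^[k * p] y))
  have hφtend : Tendsto (fun k => φ k * p) atTop atTop := by
    apply tendsto_atTop_mono (f := id)
    · intro k
      calc k ≤ φ k := hφ.le_apply
        _ ≤ φ k * p := Nat.le_mul_of_pos_right _ hp0
    · exact tendsto_id
  have htend2 : Tendsto (fun k => dist (f^[φ k * p] y) (f^[φ k * p + p] y)) atTop (𝓝 0) :=
    hDy.comp hφtend
  have hlim' : Tendsto (fun k => f^[φ k * p] y) atTop (𝓝 w) := hlim
  have hlim2 : Tendsto (fun k => f^[φ k * p + p] y) atTop (𝓝 w) := by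
    rw [tendsto_iff_dist_tendsto_zero]
    have hsum : Tendsto (fun k => dist (f^[φ k * p + p] y) (f^[φ k * p] y)
        + dist (f^[φ k * p] y) w) atTop (𝓝 (0 + 0)) := by
      refine Tendsto.add ?_ (tendsto_iff_dist_tendsto_zero.mp hlim')
      exact htend2.congr (fun k => by rw [dist_comm])
    rw [add_zero] at hsum
    exact squeeze_zero (fun k => dist_nonneg) (fun k => dist_triangle _ _ _) hsum
  have hlim3 : Tendsto (fun k => f^[p] (f^[φ k * p] y)) atTop (𝓝 w) :=
    hlim2.congr (fun k => by rw [add_comm, Function.iterate_add_apply])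
  have hlim4 : Tendsto (fun k => f^[p] (f^[φ k * p] y)) atTop (𝓝 (f^[p] w)) :=
    ((hf.iterate p).tendsto w).comp hlim'
  have hpw : f^[p] w = w := tendsto_nhds_unique hlim4 hlim3
  have hwper : w ∈ Function.periodicPts f := ⟨p, hp0, hpw⟩
  refine ⟨w, hwper, ?_⟩
  have hclose : ∀ k, dist (f^[φ k * p] y) x ≤ ε := by
    intro k
    have := hy (φ k * p)
    rwa [show u (φ k * p) = x by simp only [hu, Nat.mul_mod_left, hz0]] at this
  have : dist w x ≤ ε := by
    refine le_of_tendsto (hlim'.dist tendsto_const_nhds) ?_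
    exact Filter.Eventually.of_forall hclose
  rw [dist_comm] at this
  calc dist x w ≤ ε := this
    _ ≤ ε' / 2 := by rw [hε]; have := min_le_left ε' c; linarith
    _ < ε' := by linarith


/-- For a bi-asymptotically `c`-expansive continuous surjection with shadowing on a compact metric
space, `CR(f) = Ω(f) = closure (Per(f))`. -/
theorem cr_eq_nonwandering_eq_closure_per {X : Type*} [MetricSpace X] [CompactSpace X]
    (f : X → X) (hf : Continuous f) (hsurj : Function.Surjective f)
    (hexp : BiAsympCExpansive f) (hsh : Shadowing f) :
    {x | ChainRecurrent f x} = {x | NonWandering f x} ∧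
    {x | NonWandering f x} = closure (Function.periodicPts f) := by
  have h1 : {x | ChainRecurrent f x} ⊆ closure (Function.periodicPts f) :=
    cr_subset_closure_per f hf hsurj hexp hsh
  have h2 : closure (Function.periodicPts f) ⊆ {x | NonWandering f x} :=
    closure_minimal (per_subset_nonwandering f) (nonwandering_isClosed f)
  have h3 : {x | NonWandering f x} ⊆ {x | ChainRecurrent f x} :=
    nonwandering_subset_cr f hf
  exact ⟨Set.Subset.antisymm (h1.trans h2) h3,
    Set.Subset.antisymm (h3.trans h1) h2⟩
end

section
/- Let f: X → X be a bi-asymptotically c-expansive continuous surjection of a compact metric space with the shadowing property. Then there exists δ > 0 such that for all p, y ∈ X with d(p,y) < δ and all full orbits (pₙ),(yₙ) ∈ X_f with p₀ = p, y₀ = y, one has W^u((pₙ)) ∩ W^s(y) ≠ ∅ and W^u((yₙ)) ∩ W^s(p) ≠ ∅. -/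
open Filter Topology Function

/-!
Glue the backward half of `(pₙ)` to the forward half of `(yₙ)`: this is a pseudo-orbit whose only
jump, `d(p, y)`, is small, so shadowing provides a full orbit `(wₙ)` that stays within `c / 2` of
it. Bi-asymptotic `c`-expansivity then forces `(wₙ)` to be backward asymptotic to `(pₙ)` and forward
asymptotic to `(yₙ)`, i.e. `w₀ ∈ Wᵘ((pₙ)) ∩ Wˢ(y)`. Bi-infinite shadowing comes from one-sided
shadowing of the tails of the pseudo-orbit and compactness.
-/

section

variable {X : Type*} {f : X → X}

theorem FullOrbit.apply_natCast {x : ℤ → X} (hx : FullOrbit f x) (n : ℕ) :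
    x n = f^[n] (x 0) := by
  induction n with
  | zero => simp
  | succ n ih => rw [Nat.cast_succ, ← hx, ih, iterate_succ_apply']

variable [MetricSpace X]

theorem exists_fullOrbit_dist_le_of_eventually [CompactSpace X] (hf : Continuous f)
    {z : ℤ → X} {ε : ℝ} (a : ℕ → ℤ → X)
    (ha : ∀ m, ∀ᶠ k in atTop, f (a k m) = a k (m + 1) ∧ dist (a k m) (z m) ≤ ε) :
    ∃ w : ℤ → X, FullOrbit f w ∧ ∀ n, dist (w n) (z n) ≤ ε := by
  obtain ⟨w, -, hw⟩ :=
    isCompact_univ.exists_mapClusterPt (f := atTop) (u := a) (by simp)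
  have hclosed (m : ℤ) :
      IsClosed {v : ℤ → X | f (v m) = v (m + 1) ∧ dist (v m) (z m) ≤ ε} :=
    (isClosed_eq (hf.comp (continuous_apply m)) (continuous_apply (m + 1))).inter
      (isClosed_le ((continuous_apply m).dist continuous_const) continuous_const)
  have hw_mem (m : ℤ) := (hclosed m).mem_of_mapClusterPt hw (ha m)
  exact ⟨w, fun m => (hw_mem m).1, fun m => (hw_mem m).2⟩

theorem Shadowing.exists_fullOrbit_dist_le [CompactSpace X] (hsh : Shadowing f)
    (hf : Continuous f) {ε : ℝ} (hε : 0 < ε) :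
    ∃ δ > 0, ∀ z : ℤ → X, (∀ n, dist (f (z n)) (z (n + 1)) ≤ δ) →
      ∃ w : ℤ → X, FullOrbit f w ∧ ∀ n, dist (w n) (z n) ≤ ε := by
  obtain ⟨δ, hδ, hδsh⟩ := hsh ε hε
  refine ⟨δ, hδ, fun z hz => ?_⟩
  have htail (k : ℕ) : ∃ y : X, ∀ n : ℕ, dist (f^[n] y) (z (n - k)) ≤ ε :=
    hδsh (fun n => z (n - k)) fun n => by
      simpa only [Nat.cast_succ, sub_add_eq_add_sub] using hz (n - k)
  choose y hy using htail
  refine exists_fullOrbit_dist_le_of_eventually hf (fun k m => f^[(m + k).toNat] (y k))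
    fun m => ?_
  filter_upwards [eventually_ge_atTop (-m).toNat] with k hk
  constructor
  · rw [show (m + 1 + k).toNat = (m + k).toNat + 1 by omega, iterate_succ_apply']
  · simpa [show ((m + k).toNat : ℤ) = m + k by omega] using hy k (m + k).toNat

def splice (x y : ℤ → X) : ℤ → X := fun n => if n < 0 then x n else y n

theorem dist_splice_le {x y : ℤ → X} (hx : FullOrbit f x) (hy : FullOrbit f y) (n : ℤ) :
    dist (f (splice x y n)) (splice x y (n + 1)) ≤ dist (x 0) (y 0) := by
  rcases lt_trichotomy n (-1) with h | rfl | h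
  · simp [splice, show n < 0 by omega, show n + 1 < 0 by omega, hx n]
  · simp [splice, hx (-1)]
  · simp [splice, show ¬n < 0 by omega, show ¬n + 1 < 0 by omega, hy n]

theorem BiAsympCExpWith.mem_wu_inter_ws_of_dist_splice_le {c : ℝ} (hexp : BiAsympCExpWith f c)
    {x y w : ℤ → X} (hx : FullOrbit f x) (hy : FullOrbit f y) (hw : FullOrbit f w)
    (hxy : dist (x 0) (y 0) ≤ c / 2) (hwxy : ∀ n, dist (w n) (splice x y n) ≤ c / 2) :
    w 0 ∈ Wu f x ∩ Ws f (y 0) := by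
  have hc : 0 ≤ c / 2 := dist_nonneg.trans hxy
  have hforward (n : ℕ) : dist (w n) (y n) ≤ c := by
    simpa [splice, not_lt.2 (Int.natCast_nonneg n)] using (hwxy n).trans (by linarith)
  have hbackward (n : ℕ) : dist (w (-n)) (x (-n)) ≤ c := by
    rcases Nat.eq_zero_or_pos n with rfl | hn
    · calc dist (w (-(0 : ℕ))) (x (-(0 : ℕ))) ≤ dist (w 0) (y 0) + dist (y 0) (x 0) := by
            simpa using dist_triangle _ _ _
        _ ≤ c / 2 + c / 2 := by
            gcongr
            · simpa [splice] using hwxy 0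
            · rwa [dist_comm]
        _ = c := add_halves c
    · simpa [splice, hn] using (hwxy (-n)).trans (by linarith)
  refine ⟨⟨w, hw, rfl, ?_⟩, ?_⟩
  · simpa only [dist_comm] using hexp.2 w x hw hx hbackward
  · simpa only [Ws, Set.mem_ofPred_eq, ← hy.apply_natCast, ← hw.apply_natCast, dist_comm]
      using hexp.1 w y hw hy hforward

end

theorem wu_inter_ws_nonempty_general {X : Type*} [MetricSpace X] [CompactSpace X]
    (f : X → X) (hf : Continuous f)
    (hexp : BiAsympCExpansive f) (hsh : Shadowing f) :
    ∃ δ > (0 : ℝ), ∀ (p y : X) (pseq yseq : ℤ → X),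
      FullOrbit f pseq → FullOrbit f yseq → pseq 0 = p → yseq 0 = y → dist p y < δ →
      (Wu f pseq ∩ Ws f y).Nonempty ∧ (Wu f yseq ∩ Ws f p).Nonempty := by
  obtain ⟨c, hc, hexp⟩ := hexp
  obtain ⟨δ, hδ, hshadow⟩ := hsh.exists_fullOrbit_dist_le hf (half_pos hc)
  have key {x y : ℤ → X} (hx : FullOrbit f x) (hy : FullOrbit f y)
      (hd : dist (x 0) (y 0) < min δ (c / 2)) : (Wu f x ∩ Ws f (y 0)).Nonempty := by
    obtain ⟨w, hw, hwz⟩ := hshadow (splice x y) fun n =>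
      (dist_splice_le hx hy n).trans (hd.le.trans (min_le_left _ _))
    exact ⟨w 0, hexp.mem_wu_inter_ws_of_dist_splice_le hx hy hw
      (hd.le.trans (min_le_right _ _)) hwz⟩
  refine ⟨min δ (c / 2), lt_min hδ (half_pos hc), ?_⟩
  rintro p y pseq yseq hp hy rfl rfl hd
  exact ⟨key hp hy hd, key hy hp (dist_comm (yseq 0) (pseq 0) ▸ hd)⟩

/-- Existence of heteroclinic intersections of local stable and unstable sets for nearby points. -/
theorem wu_inter_ws_nonempty {X : Type*} [MetricSpace X] [CompactSpace X]
    (f : X → X) (hf : Continuous f) (hsurj : Function.Surjective f)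
    (hexp : BiAsympCExpansive f) (hsh : Shadowing f) :
    ∃ δ > (0 : ℝ), ∀ (p y : X) (pseq yseq : ℤ → X),
      FullOrbit f pseq → FullOrbit f yseq → pseq 0 = p → yseq 0 = y → dist p y < δ →
      (Wu f pseq ∩ Ws f y).Nonempty ∧ (Wu f yseq ∩ Ws f p).Nonempty :=
  wu_inter_ws_nonempty_general f hf hexp hsh
end

section
/- Let f: X → X be a bi-asymptotically c-expansive continuous surjection of a compact metric space with the shadowing property, B a basic set, and p ∈ Per(f) ∩ B. Then, with C_p = closure of (W^s(p) ∩ B), one has f(C_p) = C_{f(p)} and C_p is open in B. -/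
open Filter Topology Function

section G1
variable {X : Type*} [MetricSpace X] {f : X → X}

theorem chainRel_mono {α β : ℝ} (h : α ≤ β) {a b : X} : ChainRel f α a b → ChainRel f β a b := by
  rintro ⟨n, z, hn, h0, hnn, hz⟩
  exact ⟨n, z, hn, h0, hnn, fun i hi => (hz i hi).trans h⟩

theorem chainRel_trans {α : ℝ} {a b d : X} :
    ChainRel f α a b → ChainRel f α b d → ChainRel f α a d := by
  rintro ⟨n, z, hn, hz0, hzn, hz⟩ ⟨m, w, hm, hw0, hwm, hw⟩
  refine ⟨n + m, fun i => if i ≤ n then z i else w (i - n), by omega, ?_, ?_, ?_⟩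
  · simp [hz0]
  · have h1 : ¬ (n + m ≤ n) := by omega
    dsimp only; rw [if_neg h1]
    have : n + m - n = m := by omega
    rw [this, hwm]
  · intro i hi
    rcases lt_trichotomy i n with h | h | h
    · dsimp only; rw [if_pos (le_of_lt h), if_pos (by omega : i + 1 ≤ n)]
      exact hz i h
    · subst h
      dsimp only; rw [if_pos (le_refl i), if_neg (by omega : ¬ i + 1 ≤ i)]
      have h2 : i + 1 - i = 1 := by omega
      rw [h2, hzn, ← hw0]
      exact hw 0 hm
    · dsimp only; rw [if_neg (by omega : ¬ i ≤ n), if_neg (by omega : ¬ i + 1 ≤ n)]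
      have h2 : i + 1 - n = (i - n) + 1 := by omega
      rw [h2]
      exact hw (i - n) (by omega)

theorem chainRel_jump {α : ℝ} (hα : 0 ≤ α) {a b : X} (k : ℕ)
    (h : dist (f^[k + 1] a) b ≤ α) : ChainRel f α a b := by
  refine ⟨k + 1, fun i => if i ≤ k then f^[i] a else b, by omega, ?_, ?_, ?_⟩
  · simp
  · dsimp only; rw [if_neg (by omega)]
  · intro i hi
    by_cases h1 : i < k
    · dsimp only; rw [if_pos (le_of_lt h1), if_pos (by omega)]
      simp [Function.iterate_succ_apply' f i a, hα]
    · have h2 : i = k := by omega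
      subst h2
      dsimp only; rw [if_pos (le_refl i), if_neg (by omega)]
      rw [← Function.iterate_succ_apply' f i a]
      exact h

theorem chainRel_endpoint {β γ : ℝ} {a e e' : X}
    (h : ChainRel f β a e) (hd : dist e e' ≤ γ) : ChainRel f (β + γ) a e' := by
  have hγ : 0 ≤ γ := le_trans dist_nonneg hd
  obtain ⟨n, z, hn, hz0, hzn, hz⟩ := h
  refine ⟨n, fun i => if i = n then e' else z i, hn, ?_, by simp, ?_⟩
  · dsimp only; rw [if_neg (by omega)]; exact hz0
  · intro i hi
    dsimp only; rw [if_neg (by omega : ¬ i = n)]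
    by_cases h1 : i + 1 = n
    · rw [if_pos h1]
      calc dist (f (z i)) e' ≤ dist (f (z i)) (z (i+1)) + dist (z (i+1)) e' := dist_triangle _ _ _
        _ ≤ β + γ := by
            refine add_le_add (hz i hi) ?_
            rw [h1, hzn]; exact hd
    · rw [if_neg h1]
      have := hz i hi
      linarith

theorem fullOrbit_iterate {u : ℤ → X} (hu : FullOrbit f u) (n : ℤ) (k : ℕ) :
    u (n + k) = f^[k] (u n) := by
  induction k with
  | zero => simp
  | succ k ih =>
      have : n + (k + 1 : ℕ) = (n + k) + 1 := by push_cast; ring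
      rw [this, ← hu (n + k), ih, Function.iterate_succ_apply']

theorem chainRel_enter {α : ℝ} (hα : 0 ≤ α) {a : X} {u : ℤ → X} (hu : FullOrbit f u) (t : ℕ)
    (h : dist (f a) (u (-(t : ℤ))) ≤ α) : ChainRel f α a (u 0) := by
  refine ⟨t + 1, fun i => if i = 0 then a else u ((i : ℤ) - 1 - t), by omega, by simp, ?_, ?_⟩
  · dsimp only; rw [if_neg (by omega)]
    norm_num
  · intro i hi
    by_cases h0 : i = 0
    · subst h0
      dsimp only; rw [if_pos rfl, if_neg (by omega)]
      have : ((0:ℕ) + 1 : ℤ) - 1 - t = -(t:ℤ) := by push_cast; ring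
      rw [show ((1:ℕ):ℤ) - 1 - t = -(t:ℤ) by push_cast; ring]
      exact h
    · dsimp only; rw [if_neg h0, if_neg (by omega)]
      have : ((i+1:ℕ) : ℤ) - 1 - t = ((i:ℤ) - 1 - t) + 1 := by push_cast; ring
      rw [this, ← hu ((i:ℤ) - 1 - t)]
      simp [hα]

theorem chainRel_exit {α : ℝ} (hα : 0 ≤ α) {b : X} {u : ℤ → X} (hu : FullOrbit f u) (j : ℕ)
    (hj : 1 ≤ j) (h : dist (u j) b ≤ α) : ChainRel f α (u 0) b := by
  refine chainRel_jump hα (j - 1) ?_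
  have : f^[j - 1 + 1] (u 0) = u j := by
    rw [show (j:ℤ) = 0 + (j - 1 + 1 : ℕ) by push_cast; omega, fullOrbit_iterate hu]
  rw [this]; exact h

theorem chainRel_join {α : ℝ} (hα : 0 < α) {a b : X}
    (hb : ∀ β > 0, ChainRel f β b b) (h : dist (f a) (f b) ≤ α / 2) : ChainRel f α a b := by
  obtain ⟨m, ζ, hm, hζ0, hζm, hζ⟩ := hb (α/2) (by linarith)
  refine ⟨m, fun i => if i = 0 then a else ζ i, hm, by simp, ?_, ?_⟩
  · dsimp only; rw [if_neg (by omega)]; exact hζm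
  · intro i hi
    by_cases h0 : i = 0
    · subst h0
      dsimp only; rw [if_pos rfl, if_neg (by omega)]
      calc dist (f a) (ζ 1) ≤ dist (f a) (f b) + dist (f b) (ζ 1) := dist_triangle _ _ _
        _ ≤ α/2 + α/2 := by
            refine add_le_add h ?_
            have := hζ 0 hi
            rwa [hζ0] at this
        _ = α := by ring
    · dsimp only; rw [if_neg h0, if_neg (by omega)]
      exact (hζ i hi).trans (by linarith)

theorem chainRel_map {α γ : ℝ} {a b : X} (h : ChainRel f γ a b)
    (hmod : ∀ u v : X, dist u v ≤ γ → dist (f u) (f v) ≤ α) : ChainRel f α (f a) (f b) := by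
  obtain ⟨n, z, hn, hz0, hzn, hz⟩ := h
  exact ⟨n, fun i => f (z i), hn, by simp [hz0], by simp [hzn],
    fun i hi => hmod _ _ (hz i hi)⟩

theorem loopPoint {β : ℝ} {b : X} (h : ChainRel f β b b) :
    ∃ w : X, dist (f w) b ≤ β ∧
      ∀ (γ : ℝ) (a : X), 0 ≤ γ → dist w a ≤ γ → ChainRel f (β + γ) b a := by
  obtain ⟨n, z, hn, hz0, hzn, hz⟩ := h
  rcases Nat.lt_or_ge n 2 with h2 | h2
  · have hn1 : n = 1 := by omega
    subst hn1
    refine ⟨b, by simpa [hz0, hzn] using hz 0 (by omega), ?_⟩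
    intro γ a hγ hwa
    refine ⟨1, fun i => if i = 0 then b else a, by omega, by simp, by simp, ?_⟩
    intro i hi
    have h0 : i = 0 := by omega
    subst h0
    dsimp only; rw [if_pos rfl, if_neg (by omega)]
    calc dist (f b) a ≤ dist (f b) b + dist b a := dist_triangle _ _ _
      _ ≤ β + γ := by
          refine add_le_add ?_ hwa
          have := hz 0 (by omega)
          rwa [hz0, hzn] at this
  · refine ⟨z (n - 1), ?_, ?_⟩
    · have := hz (n-1) (by omega)
      rw [show n - 1 + 1 = n by omega, hzn] at this
      exact this
    · intro γ a hγ hwa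
      refine ⟨n - 1, fun i => if i = n - 1 then a else z i, by omega, ?_, by simp, ?_⟩
      · dsimp only; rw [if_neg (by omega)]; exact hz0
      · intro i hi
        dsimp only; rw [if_neg (by omega : ¬ i = n - 1)]
        by_cases h1 : i + 1 = n - 1
        · rw [if_pos h1]
          calc dist (f (z i)) a ≤ dist (f (z i)) (z (i+1)) + dist (z (i+1)) a := dist_triangle _ _ _
            _ ≤ β + γ := by
                refine add_le_add (hz i (by omega)) ?_
                rw [h1]; exact hwa
        · rw [if_neg h1]
          have := hz i (by omega)
          linarith

end G1

section G2
variable {X : Type*} [MetricSpace X] {f : X → X}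

/-- uniform continuity modulus -/
theorem unif_modulus [CompactSpace X] (hf : Continuous f) :
    ∀ α > 0, ∃ γ : ℝ, 0 < γ ∧ γ ≤ α ∧ ∀ a b : X, dist a b ≤ γ → dist (f a) (f b) ≤ α := by
  intro α hα
  have huc : UniformContinuous f := CompactSpace.uniformContinuous_of_continuous hf
  rw [Metric.uniformContinuous_iff] at huc
  obtain ⟨δ, hδ, h⟩ := huc α hα
  refine ⟨min (δ/2) α, by positivity, min_le_right _ _, ?_⟩
  intro a b hab
  by_cases hab2 : dist a b < δ
  · exact le_of_lt (h hab2)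
  · exfalso
    have : min (δ/2) α ≤ δ/2 := min_le_left _ _
    linarith [not_lt.mp hab2]

/-- a full orbit through a given point, using a right inverse for the past -/
theorem exists_fullOrbit_through (hsurj : Function.Surjective f) (a : X) :
    ∃ u : ℤ → X, FullOrbit f u ∧ u 0 = a ∧ ∀ k : ℕ, u k = f^[k] a := by
  obtain ⟨g, hg⟩ := hsurj.hasRightInverse
  refine ⟨fun n => if h : 0 ≤ n then f^[n.toNat] a else g^[(-n).toNat] a, ?_, by simp, ?_⟩
  · intro n
    rcases lt_trichotomy n 0 with h | h | h
    · by_cases h1 : n = -1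
      · subst h1
        simp only [dif_neg (by omega : ¬ (0:ℤ) ≤ -1), dif_pos (by omega : (0:ℤ) ≤ -1 + 1)]
        norm_num [hg a]
      · dsimp only; rw [dif_neg (by omega : ¬ 0 ≤ n), dif_neg (by omega : ¬ 0 ≤ n + 1)]
        have h2 : (-n).toNat = (-(n+1)).toNat + 1 := by omega
        rw [h2, Function.iterate_succ_apply']
        exact hg _
    · subst h; simp [hg]
    · dsimp only; rw [dif_pos (by omega : (0:ℤ) ≤ n), dif_pos (by omega : (0:ℤ) ≤ n + 1)]
      have h2 : (n+1).toNat = n.toNat + 1 := by omega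
      rw [h2, Function.iterate_succ_apply']
  · intro k
    simp only [dif_pos (by positivity : (0:ℤ) ≤ (k:ℤ))]
    norm_num

theorem fullOrbit_shift {u : ℤ → X} (hu : FullOrbit f u) (m : ℤ) :
    FullOrbit f (fun n => u (n + m)) := by
  intro n
  have := hu (n + m)
  dsimp only
  rw [this]; ring_nf

/-- ℤ-indexed shadowing derived from ℕ-shadowing by compactness. -/
theorem zshadow [CompactSpace X] (hf : Continuous f) (hsurj : Function.Surjective f)
    (hsh : Shadowing f) :
    ∀ ε > 0, ∃ δ > 0, ∀ x : ℤ → X, (∀ n : ℤ, dist (f (x n)) (x (n + 1)) ≤ δ) →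
      ∃ w : ℤ → X, FullOrbit f w ∧ ∀ n : ℤ, dist (w n) (x n) ≤ ε := by
  intro ε hε
  obtain ⟨δ, hδ, hsh'⟩ := hsh ε hε
  refine ⟨δ, hδ, ?_⟩
  intro x hx
  -- for each m, shadow the pseudo-orbit started at -m
  have key : ∀ m : ℕ, ∃ o : ℤ → X, FullOrbit f o ∧ ∀ n : ℤ, -(m:ℤ) ≤ n → dist (o n) (x n) ≤ ε := by
    intro m
    obtain ⟨y, hy⟩ := hsh' (fun i => x ((i : ℤ) - m)) (by
      intro n
      have := hx ((n:ℤ) - m)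
      have h2 : ((n+1:ℕ):ℤ) - m = ((n:ℤ) - m) + 1 := by push_cast; ring
      rw [h2]; exact this)
    obtain ⟨g, hg⟩ := hsurj.hasRightInverse
    refine ⟨fun n => if h : -(m:ℤ) ≤ n then f^[(n + m).toNat] y else g^[(-(n + m)).toNat] y, ?_, ?_⟩
    · intro n
      rcases lt_trichotomy n (-(m:ℤ)) with h | h | h
      · by_cases h1 : n = -(m:ℤ) - 1
        · subst h1
          dsimp only; rw [dif_neg (by omega), dif_pos (by omega)]
          rw [show (-(-(m:ℤ) - 1 + m)).toNat = 1 by omega,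
              show (-(m:ℤ) - 1 + 1 + m).toNat = 0 by omega]
          simpa using hg y
        · dsimp only; rw [dif_neg (by omega), dif_neg (by omega)]
          have h2 : (-(n + m)).toNat = (-(n + 1 + m)).toNat + 1 := by omega
          rw [h2, Function.iterate_succ_apply']
          exact hg _
      · subst h
        dsimp only; rw [dif_pos (by omega), dif_pos (by omega)]
        rw [show (-(m:ℤ) + m).toNat = 0 by omega, show (-(m:ℤ) + 1 + m).toNat = 1 by omega]
        simp
      · dsimp only; rw [dif_pos (by omega), dif_pos (by omega)]
        have h2 : (n + 1 + m).toNat = (n + m).toNat + 1 := by omega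
        rw [h2, Function.iterate_succ_apply']
    · intro n hn
      dsimp only; rw [dif_pos hn]
      have := hy (n + m).toNat
      have h2 : (((n+m).toNat : ℕ) : ℤ) - m = n := by omega
      rw [h2] at this
      exact this
  choose o ho1 ho2 using key
  -- take a cluster point in the product space
  have hne : (Filter.map o atTop).NeBot := Filter.map_neBot
  obtain ⟨w, -, hw⟩ := (isCompact_univ (X := ℤ → X)).exists_clusterPt
      (f := Filter.map o atTop) (le_principal_iff.mpr univ_mem)
  have hmem : ∀ C : Set (ℤ → X), IsClosed C → (∀ᶠ m in atTop, o m ∈ C) → w ∈ C := by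
    intro C hC hev
    have h1 : C ∈ Filter.map o atTop := hev
    have h2 : ClusterPt w (𝓟 C) := hw.mono (le_principal_iff.mpr h1)
    exact hC.closure_eq ▸ mem_closure_iff_clusterPt.mpr h2
  refine ⟨w, ?_, ?_⟩
  · intro n
    have hC : IsClosed {u : ℤ → X | f (u n) = u (n+1)} :=
      isClosed_eq (hf.comp (continuous_apply n)) (continuous_apply (n+1))
    exact hmem _ hC (Eventually.of_forall (fun m => ho1 m n))
  · intro n
    have hC : IsClosed {u : ℤ → X | dist (u n) (x n) ≤ ε} :=
      isClosed_le ((continuous_apply n).dist continuous_const) continuous_const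
    refine hmem _ hC ?_
    filter_upwards [eventually_ge_atTop (n.natAbs)] with m hm
    exact ho2 m n (by omega)

theorem iterate_mul_periodic {q : X} {m : ℕ} (hq : f^[m] q = q) (j : ℕ) : f^[m * j] q = q := by
  induction j with
  | zero => simp
  | succ j ih =>
      rw [show m * (j+1) = m * j + m by ring, Function.iterate_add_apply, hq, ih]

theorem iterate_mod {q : X} {m : ℕ} (hm : 0 < m) (hq : f^[m] q = q) (k : ℕ) :
    f^[k] q = f^[k % m] q := by
  conv_lhs => rw [← Nat.div_add_mod k m]
  rw [show m * (k / m) + k % m = k % m + m * (k/m) by ring, Function.iterate_add_apply,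
    iterate_mul_periodic hq]

/-- periodic full orbit through a periodic point -/
noncomputable def phat (f : X → X) (q : X) (m : ℕ) : ℤ → X :=
  fun n => f^[(n % (m:ℤ)).toNat] q

theorem phat_fullOrbit {q : X} {m : ℕ} (hm : 0 < m) (hq : f^[m] q = q) :
    FullOrbit f (phat f q m) := by
  intro n
  have hm' : (0:ℤ) < (m:ℤ) := by exact_mod_cast hm
  have h1 : 0 ≤ n % (m:ℤ) := Int.emod_nonneg n (by omega)
  have h2 : n % (m:ℤ) < m := Int.emod_lt_of_pos n hm'
  have key : (n+1) % (m:ℤ) = (n % m + 1) % m := by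
    conv_lhs => rw [← Int.emod_add_mul_ediv n m]
    rw [show n % (m:ℤ) + (m:ℤ) * (n / m) + 1 = (n % (m:ℤ) + 1) + (m:ℤ) * (n / m) by ring,
      Int.add_mul_emod_self_left]
  unfold phat
  rcases lt_or_ge (n % (m:ℤ) + 1) m with h3 | h3
  · have h4 : (n+1) % (m:ℤ) = n % m + 1 := by
      rw [key, Int.emod_eq_of_lt (by omega) h3]
    rw [h4, show (n % (m:ℤ) + 1).toNat = (n % (m:ℤ)).toNat + 1 by omega,
      Function.iterate_succ_apply']
  · have h5 : n % (m:ℤ) + 1 = m := by omega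
    have h4 : (n+1) % (m:ℤ) = 0 := by
      rw [key, h5, Int.emod_self]
    rw [h4]
    have h6 : (n % (m:ℤ)).toNat + 1 = m := by omega
    calc f (f^[(n % (m:ℤ)).toNat] q) = f^[(n % (m:ℤ)).toNat + 1] q :=
          (Function.iterate_succ_apply' f _ q).symm
      _ = f^[m] q := by rw [h6]
      _ = f^[(0:ℤ).toNat] q := by simpa using hq

theorem phat_nat {q : X} {m : ℕ} (hm : 0 < m) (hq : f^[m] q = q) (k : ℕ) :
    phat f q m (k : ℤ) = f^[k] q := by
  unfold phat
  have : ((k:ℤ) % (m:ℤ)).toNat = k % m := by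
    have h := Int.natCast_mod k m
    omega
  rw [this, ← iterate_mod hm hq]

theorem phat_zero {q : X} {m : ℕ} : phat f q m 0 = q := by
  unfold phat; simp

theorem phat_periodic {q : X} {m : ℕ} (n : ℤ) : phat f q m (n + m) = phat f q m n := by
  unfold phat
  rw [show n + (m:ℤ) = n + (m:ℤ) * 1 by ring, Int.add_mul_emod_self_left]

theorem phat_mem_orbit {q : X} {m : ℕ} (hm : 0 < m) (n : ℤ) :
    ∃ k : ℕ, phat f q m n = f^[k] q := ⟨(n % (m:ℤ)).toNat, rfl⟩

/-- glue two full orbits along a small jump at time 0, and shadow -/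
theorem glue {δ ε : ℝ}
    (hsh' : ∀ x : ℤ → X, (∀ n : ℤ, dist (f (x n)) (x (n + 1)) ≤ δ) →
      ∃ w : ℤ → X, FullOrbit f w ∧ ∀ n : ℤ, dist (w n) (x n) ≤ ε)
    {P F : ℤ → X} (hP : FullOrbit f P) (hF : FullOrbit f F)
    (hj : dist (f (P 0)) (F 1) ≤ δ) :
    ∃ w : ℤ → X, FullOrbit f w ∧ (∀ n : ℤ, n ≤ 0 → dist (w n) (P n) ≤ ε) ∧
      (∀ n : ℤ, 1 ≤ n → dist (w n) (F n) ≤ ε) := by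
  have hδ0 : 0 ≤ δ := le_trans dist_nonneg hj
  have hps : ∀ n : ℤ, dist (f ((fun n => if n ≤ 0 then P n else F n) n))
      ((fun n => if n ≤ 0 then P n else F n) (n + 1)) ≤ δ := by
    intro n
    rcases lt_trichotomy n 0 with h | h | h
    · dsimp only; rw [if_pos (le_of_lt h), if_pos (by omega), hP n]
      simp [hδ0]
    · subst h
      dsimp only; rw [if_pos (le_refl 0), if_neg (by omega)]
      exact hj
    · dsimp only; rw [if_neg (by omega), if_neg (by omega), hF n]
      simp [hδ0]
  obtain ⟨w, hw1, hw2⟩ := hsh' (fun n => if n ≤ 0 then P n else F n) hps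
  refine ⟨w, hw1, ?_, ?_⟩
  · intro n hn
    have := hw2 n
    rwa [if_pos hn] at this
  · intro n hn
    have := hw2 n
    rwa [if_neg (by omega)] at this

end G2

section Main
variable {X : Type*} [MetricSpace X] [CompactSpace X] {f : X → X}

/-- Lemma A: near any chain recurrent point there is a periodic point `q` together
with a full orbit `vhat` forward and backward asymptotic to the periodic orbit of `q`. -/
theorem lemmaA (hf : Continuous f) (hsurj : Function.Surjective f) (hsh : Shadowing f)
    {c : ℝ} (hcpos : 0 < c) (hc : BiAsympCExpWith f c)
    {ε : ℝ} (hε : 0 < ε) (hεc : ε ≤ c / 2) {y : X} (hy : ChainRecurrent f y) :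
    ∃ (n₀ : ℕ) (q : X) (vhat : ℤ → X), 0 < n₀ ∧ f^[n₀] q = q ∧ FullOrbit f vhat ∧
      dist q y ≤ ε ∧ dist (vhat 0) y ≤ ε ∧
      Tendsto (fun j : ℕ => dist (vhat j) (phat f q n₀ j)) atTop (𝓝 0) ∧
      Tendsto (fun j : ℕ => dist (vhat (-(j:ℤ))) (phat f q n₀ (-(j:ℤ)))) atTop (𝓝 0) ∧
      ChainRel f (2*ε) y q ∧ ChainRel f ε q y := by
  obtain ⟨δ, hδpos, hδ⟩ := zshadow hf hsurj hsh ε hε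
  set δ' := min δ ε with hδ'def
  have hδ'pos : 0 < δ' := lt_min hδpos hε
  obtain ⟨n₀, z, hn₀, hz0, hzn, hz⟩ := hy δ' hδ'pos
  -- the periodic pseudo-orbit
  set x : ℤ → X := fun j => z ((j % (n₀:ℤ)).toNat) with hxdef
  have hn₀' : (0:ℤ) < (n₀:ℤ) := by exact_mod_cast hn₀
  have hxeq : ∀ i j : ℤ, i % n₀ = j % n₀ → x i = x j := by
    intro i j h; simp only [hxdef, h]
  have hxper : ∀ j : ℤ, x (j + n₀) = x j := by
    intro j
    apply hxeq
    rw [show j + (n₀:ℤ) = j + (n₀:ℤ) * 1 by ring, Int.add_mul_emod_self_left]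
  have hxnat : ∀ k : ℕ, k < n₀ → x k = z k := by
    intro k hk
    simp only [hxdef]
    rw [Int.emod_eq_of_lt (by positivity) (by exact_mod_cast hk)]
    simp
  have hx0 : x 0 = y := by
    have := hxnat 0 hn₀
    simpa [hz0] using this
  have hxpseudo : ∀ j : ℤ, dist (f (x j)) (x (j + 1)) ≤ δ := by
    intro j
    have h1 : 0 ≤ j % n₀ := Int.emod_nonneg j (by omega)
    have h2 : j % n₀ < n₀ := Int.emod_lt_of_pos j hn₀'
    have key : (j+1) % (n₀:ℤ) = (j % n₀ + 1) % n₀ := by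
      conv_lhs => rw [← Int.emod_add_mul_ediv j n₀]
      rw [show j % (n₀:ℤ) + (n₀:ℤ) * (j / n₀) + 1 = (j % (n₀:ℤ) + 1) + (n₀:ℤ) * (j / n₀) by ring,
        Int.add_mul_emod_self_left]
    have hjump : dist (f (z ((j % (n₀:ℤ)).toNat))) (z ((j % (n₀:ℤ)).toNat + 1)) ≤ δ' :=
      hz _ (by omega)
    rcases lt_or_ge (j % (n₀:ℤ) + 1) n₀ with h3 | h3
    · have h4 : (j+1) % (n₀:ℤ) = j % n₀ + 1 := by
        rw [key, Int.emod_eq_of_lt (by omega) h3]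
      simp only [hxdef]
      rw [h4, show (j % (n₀:ℤ) + 1).toNat = (j % (n₀:ℤ)).toNat + 1 by omega]
      exact hjump.trans (min_le_left _ _)
    · have h5 : j % (n₀:ℤ) + 1 = n₀ := by omega
      have h4 : (j+1) % (n₀:ℤ) = 0 := by rw [key, h5, Int.emod_self]
      simp only [hxdef]
      rw [h4]
      have h6 : (j % (n₀:ℤ)).toNat + 1 = n₀ := by omega
      have : z ((0:ℤ).toNat) = z ((j % (n₀:ℤ)).toNat + 1) := by
        rw [h6]; simp [hz0, hzn]
      rw [this]
      exact hjump.trans (min_le_left _ _)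
  obtain ⟨vhat, hvorb, hvx⟩ := hδ x hxpseudo
  -- compare vhat with its shift by n₀
  have hshiftbound : ∀ k : ℕ, dist (vhat k) ((fun n => vhat (n + n₀)) k) ≤ c := by
    intro k
    calc dist (vhat k) (vhat (k + n₀)) ≤ dist (vhat k) (x k) + dist (x k) (vhat (k + n₀)) :=
          dist_triangle _ _ _
      _ ≤ ε + ε := by
          refine add_le_add (hvx k) ?_
          rw [← hxper k, dist_comm]
          exact hvx _
      _ ≤ c := by linarith
  have hshift : Tendsto (fun k : ℕ => dist (vhat k) (vhat (k + n₀))) atTop (𝓝 0) :=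
    hc.1 vhat (fun n => vhat (n + n₀)) hvorb (fullOrbit_shift hvorb n₀) hshiftbound
  -- the sequence of returns
  set a : ℕ → X := fun k => vhat ((k * n₀ : ℕ) : ℤ) with hadef
  have hmulcast : ∀ k : ℕ, (((k+1) * n₀ : ℕ) : ℤ) = ((k * n₀ : ℕ) : ℤ) + n₀ := by
    intro k; push_cast; ring
  have hastep : ∀ k : ℕ, a (k + 1) = f^[n₀] (a k) := by
    intro k
    simp only [hadef]
    rw [hmulcast k, fullOrbit_iterate hvorb]
  have hadist : Tendsto (fun k : ℕ => dist (a k) (a (k + 1))) atTop (𝓝 0) := by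
    have hcomp : Tendsto (fun k : ℕ => k * n₀) atTop atTop :=
      tendsto_atTop_mono (fun k => Nat.le_mul_of_pos_right k hn₀) tendsto_id
    have h := hshift.comp hcomp
    refine h.congr fun k => ?_
    simp only [Function.comp_apply, hadef]
    rw [hmulcast k]
  obtain ⟨q, -, φ, hφmono, hφconv⟩ :=
    (isCompact_univ (X := X)).tendsto_subseq (x := a) (fun k => Set.mem_univ _)
  have hφatTop : Tendsto φ atTop atTop := hφmono.tendsto_atTop
  -- q is periodic
  have haq' : Tendsto (fun j => a (φ j + 1)) atTop (𝓝 q) := by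
    rw [tendsto_iff_dist_tendsto_zero]
    have hb : Tendsto (fun j => dist (a (φ j)) (a (φ j + 1)) + dist ((a ∘ φ) j) q) atTop
        (𝓝 (0 + 0)) :=
      (hadist.comp hφatTop).add (tendsto_iff_dist_tendsto_zero.mp hφconv)
    rw [add_zero] at hb
    refine squeeze_zero (fun j => dist_nonneg) (fun j => ?_) hb
    calc dist (a (φ j + 1)) q ≤ dist (a (φ j + 1)) (a (φ j)) + dist (a (φ j)) q :=
          dist_triangle _ _ _
      _ = dist (a (φ j)) (a (φ j + 1)) + dist ((a ∘ φ) j) q := by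
          rw [dist_comm (a (φ j + 1))]; rfl
  have hq : f^[n₀] q = q := by
    have h1 : Tendsto (fun j => f^[n₀] (a (φ j))) atTop (𝓝 (f^[n₀] q)) :=
      ((hf.iterate n₀).continuousAt.tendsto).comp hφconv
    have h2 : (fun j => f^[n₀] (a (φ j))) = fun j => a (φ j + 1) := by
      funext j; rw [hastep]
    rw [h2] at h1
    exact tendsto_nhds_unique h1 haq'
  -- dist (f^[k] q) (x k) ≤ ε
  have hqx : ∀ k : ℕ, dist (f^[k] q) (x k) ≤ ε := by
    intro k
    have h1 : Tendsto (fun j => dist (f^[k] (a (φ j))) (x k)) atTop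
        (𝓝 (dist (f^[k] q) (x k))) :=
      (((hf.iterate k).continuousAt.tendsto).comp hφconv).dist tendsto_const_nhds
    refine le_of_tendsto h1 (Eventually.of_forall fun j => ?_)
    have h2 : f^[k] (a (φ j)) = vhat (((φ j * n₀ : ℕ) : ℤ) + k) := by
      rw [fullOrbit_iterate hvorb]
    rw [h2]
    have h3 : x (((φ j * n₀ : ℕ) : ℤ) + k) = x k := by
      apply hxeq
      push_cast
      rw [show (φ j : ℤ) * n₀ + k = k + n₀ * (φ j) by ring, Int.add_mul_emod_self_left]
    rw [← h3]
    exact hvx _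
  have hqy : dist q y ≤ ε := by
    have h := hqx 0
    simp only [Function.iterate_zero, id_eq, Nat.cast_zero] at h
    rwa [hx0] at h
  -- phat is ε-close to x everywhere
  have hphatx : ∀ j : ℤ, dist (phat f q n₀ j) (x j) ≤ ε := by
    intro j
    have h1 : 0 ≤ j % n₀ := Int.emod_nonneg j (by omega)
    have h2 : j % n₀ < n₀ := Int.emod_lt_of_pos j hn₀'
    have h3 : x ((j % (n₀:ℤ)).toNat : ℤ) = x j := by
      apply hxeq
      rw [Int.emod_eq_of_lt (by omega) (by omega : ((j % (n₀:ℤ)).toNat : ℤ) < n₀)]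
      omega
    rw [← h3]
    exact hqx _
  have hvphat : ∀ j : ℤ, dist (vhat j) (phat f q n₀ j) ≤ c := by
    intro j
    calc dist (vhat j) (phat f q n₀ j)
        ≤ dist (vhat j) (x j) + dist (phat f q n₀ j) (x j) := by
          rw [dist_comm (phat f q n₀ j)]
          exact dist_triangle _ _ _
      _ ≤ ε + ε := add_le_add (hvx j) (hphatx j)
      _ ≤ c := by linarith
  have hporb : FullOrbit f (phat f q n₀) := phat_fullOrbit hn₀ hq
  refine ⟨n₀, q, vhat, hn₀, hq, hvorb, hqy, ?_, ?_, ?_, ?_, ?_⟩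
  · have := hvx 0
    rwa [hx0] at this
  · exact hc.1 vhat (phat f q n₀) hvorb hporb (fun n => hvphat n)
  · exact hc.2 vhat (phat f q n₀) hvorb hporb (fun n => hvphat _)
  · -- chain y → q
    have hloop : ChainRel f δ' y y := ⟨n₀, z, hn₀, hz0, hzn, hz⟩
    have hd : dist y q ≤ ε := by rw [dist_comm]; exact hqy
    have := chainRel_endpoint hloop hd
    refine chainRel_mono ?_ this
    have : δ' ≤ ε := min_le_right _ _
    linarith
  · -- chain q → y
    refine chainRel_jump (le_of_lt hε) (n₀ - 1) ?_
    rw [show n₀ - 1 + 1 = n₀ by omega, hq]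
    exact hqy

end Main


section BSet
variable {X : Type*} [MetricSpace X] [CompactSpace X] {f : X → X} {B : Set X}

theorem cr_of_mem_B (hB : IsBasicSet f B) {a : X} (ha : a ∈ B) : ChainRecurrent f a := by
  obtain ⟨x₀, hx₀, hBeq⟩ := hB
  rw [hBeq] at ha
  exact ha.1

theorem chain_in_B (hB : IsBasicSet f B) {a b : X} (ha : a ∈ B) (hb : b ∈ B)
    {α : ℝ} (hα : 0 < α) : ChainRel f α a b := by
  obtain ⟨x₀, hx₀, hBeq⟩ := hB
  rw [hBeq] at ha hb
  exact chainRel_trans ((ha.2 α hα).2) ((hb.2 α hα).1)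

theorem mem_B_of_chains (hB : IsBasicSet f B) {u : X}
    (h : ∀ α > 0, (∃ b ∈ B, ChainRel f α u b) ∧ (∃ b' ∈ B, ChainRel f α b' u)) : u ∈ B := by
  obtain ⟨x₀, hx₀, hBeq⟩ := hB
  have hx₀B : x₀ ∈ B := by
    rw [hBeq]
    exact ⟨hx₀, fun α hα => ⟨hx₀ α hα, hx₀ α hα⟩⟩
  rw [hBeq]
  constructor
  · intro α hα
    obtain ⟨⟨b, hbB, h1⟩, ⟨b', hb'B, h2⟩⟩ := h α hα
    exact chainRel_trans h1 (chainRel_trans (chain_in_B ⟨x₀, hx₀, hBeq⟩ hbB hb'B hα) h2)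
  · intro α hα
    obtain ⟨⟨b, hbB, h1⟩, ⟨b', hb'B, h2⟩⟩ := h α hα
    constructor
    · exact chainRel_trans (chain_in_B ⟨x₀, hx₀, hBeq⟩ hx₀B hb'B hα) h2
    · exact chainRel_trans h1 (chain_in_B ⟨x₀, hx₀, hBeq⟩ hbB hx₀B hα)

theorem B_isClosed (hf : Continuous f) (hB : IsBasicSet f B) : IsClosed B := by
  refine isClosed_of_closure_subset ?_
  intro y hy
  refine mem_B_of_chains hB ?_
  intro α hα
  obtain ⟨γ, hγpos, hγle, hγ⟩ := unif_modulus hf (α/2) (by linarith)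
  obtain ⟨b, hbB, hdist⟩ := Metric.mem_closure_iff.mp hy (min γ (α/2)) (by positivity)
  have hbcr : ChainRecurrent f b := cr_of_mem_B hB hbB
  constructor
  · refine ⟨b, hbB, chainRel_join hα (fun β hβ => hbcr β hβ) ?_⟩
    exact hγ _ _ (le_trans (le_of_lt hdist) (min_le_left _ _))
  · refine ⟨b, hbB, ?_⟩
    have hloop : ChainRel f (α/2) b b := hbcr (α/2) (by linarith)
    have hd : dist b y ≤ α/2 := by
      rw [dist_comm]; exact le_trans (le_of_lt hdist) (min_le_right _ _)
    exact chainRel_mono (by linarith) (chainRel_endpoint hloop hd)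

/-- from a fine loop at `a` one can chain from `f a` back to `a` -/
theorem chainRel_succ {γ β : ℝ} {a : X} (hβ : 0 ≤ β) (h : ChainRel f γ a a)
    (hmod : ∀ u v : X, dist u v ≤ γ → dist (f u) (f v) ≤ β) :
    ChainRel f (β + γ) (f a) a := by
  have hγ : 0 ≤ γ := by
    obtain ⟨n, z, hn, hz0, hzn, hz⟩ := h
    exact le_trans dist_nonneg (hz 0 hn)
  obtain ⟨n, z, hn, hz0, hzn, hz⟩ := h
  rcases Nat.lt_or_ge n 2 with h2 | h2
  · have hn1 : n = 1 := by omega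
    subst hn1
    refine ⟨1, fun i => if i = 0 then f a else a, by omega, by simp, by simp, ?_⟩
    intro i hi
    have h0 : i = 0 := by omega
    subst h0
    dsimp only; rw [if_pos rfl, if_neg (by omega)]
    have hja : dist (f a) a ≤ γ := by
      have := hz 0 (by omega)
      rwa [hz0, hzn] at this
    calc dist (f (f a)) a ≤ dist (f (f a)) (f a) + dist (f a) a := dist_triangle _ _ _
      _ ≤ β + γ := add_le_add (hmod _ _ hja) hja
  · refine ⟨n - 1, fun i => if i = 0 then f a else z (i + 1), by omega, by simp, ?_, ?_⟩
    · dsimp only; rw [if_neg (by omega), show n - 1 + 1 = n by omega, hzn]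
    · intro i hi
      by_cases h0 : i = 0
      · subst h0
        dsimp only; rw [if_pos rfl, if_neg (by omega)]
        have h1 : dist (f (z 0)) (z 1) ≤ γ := hz 0 (by omega)
        calc dist (f (f a)) (z (0 + 1 + 1))
            ≤ dist (f (f a)) (f (z 1)) + dist (f (z 1)) (z 2) := dist_triangle _ _ _
          _ ≤ β + γ := by
              refine add_le_add (hmod _ _ ?_) (hz 1 (by omega))
              rw [← hz0]; exact h1
      · dsimp only; rw [if_neg h0, if_neg (by omega)]
        have := hz (i + 1) (by omega)
        linarith

theorem B_fwd_invariant (hf : Continuous f) (hB : IsBasicSet f B) {a : X} (ha : a ∈ B) :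
    f a ∈ B := by
  refine mem_B_of_chains hB ?_
  intro α hα
  have hacr : ChainRecurrent f a := cr_of_mem_B hB ha
  constructor
  · refine ⟨a, ha, ?_⟩
    obtain ⟨γ, hγpos, hγle, hγ⟩ := unif_modulus hf (α/2) (by linarith)
    have hloop : ChainRel f γ a a := hacr γ hγpos
    have := chainRel_succ (by linarith) hloop (fun u v h => hγ u v h)
    exact chainRel_mono (by linarith) this
  · refine ⟨a, ha, ?_⟩
    exact chainRel_jump (le_of_lt hα) 0 (by simp; linarith)

theorem B_iter_invariant (hf : Continuous f) (hB : IsBasicSet f B) {a : X} (ha : a ∈ B)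
    (k : ℕ) : f^[k] a ∈ B := by
  induction k with
  | zero => simpa using ha
  | succ k ih =>
      rw [Function.iterate_succ_apply']
      exact B_fwd_invariant hf hB ih

theorem B_preimage (hf : Continuous f) (hB : IsBasicSet f B) {b : X} (hb : b ∈ B) :
    ∃ a ∈ B, f a = b := by
  have hbcr : ChainRecurrent f b := cr_of_mem_B hB hb
  have key : ∀ k : ℕ, ∃ w : X, dist (f w) b ≤ 1/(k+1) ∧
      ∀ (γ : ℝ) (a' : X), 0 ≤ γ → dist w a' ≤ γ → ChainRel f (1/(k+1) + γ) b a' := by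
    intro k
    exact loopPoint (hbcr (1/(k+1)) (by positivity))
  choose w hw1 hw2 using key
  obtain ⟨a, -, φ, hφmono, hφconv⟩ :=
    (isCompact_univ (X := X)).tendsto_subseq (x := w) (fun k => Set.mem_univ _)
  have hφatTop : Tendsto φ atTop atTop := hφmono.tendsto_atTop
  have hfa : f a = b := by
    have h1 : Tendsto (fun j => f (w (φ j))) atTop (𝓝 (f a)) :=
      (hf.continuousAt.tendsto).comp hφconv
    have h2 : Tendsto (fun j => f (w (φ j))) atTop (𝓝 b) := by
      rw [tendsto_iff_dist_tendsto_zero]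
      refine squeeze_zero (fun j => dist_nonneg) (fun j => hw1 (φ j)) ?_
      have hb1 : Tendsto (fun k : ℕ => 1/((k:ℝ)+1)) atTop (𝓝 0) :=
        tendsto_one_div_add_atTop_nhds_zero_nat
      exact hb1.comp hφatTop
    exact tendsto_nhds_unique h1 h2
  refine ⟨a, ?_, hfa⟩
  refine mem_B_of_chains hB ?_
  intro α hα
  constructor
  · refine ⟨b, hb, ?_⟩
    exact chainRel_jump (le_of_lt hα) 0 (by simp [hfa]; linarith)
  · refine ⟨b, hb, ?_⟩
    -- choose j with 1/(φ j + 1) ≤ α/2 and dist (w (φ j)) a ≤ α/2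
    have h1 : Tendsto (fun j => dist (w (φ j)) a) atTop (𝓝 0) :=
      tendsto_iff_dist_tendsto_zero.mp hφconv
    have h2 : Tendsto (fun j : ℕ => 1/((φ j : ℝ)+1)) atTop (𝓝 0) :=
      tendsto_one_div_add_atTop_nhds_zero_nat.comp hφatTop
    obtain ⟨j, hj1, hj2⟩ : ∃ j, dist (w (φ j)) a ≤ α/2 ∧ 1/((φ j : ℝ)+1) ≤ α/2 := by
      have e1 := h1.eventually_le_const (show (0:ℝ) < α/2 by linarith)
      have e2 := h2.eventually_le_const (show (0:ℝ) < α/2 by linarith)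
      obtain ⟨j, hj1, hj2⟩ := (e1.and e2).exists
      exact ⟨j, hj1, hj2⟩
    have := hw2 (φ j) (α/2) a (by linarith) hj1
    refine chainRel_mono ?_ this
    linarith

end BSet

section Main2
variable {X : Type*} [MetricSpace X] [CompactSpace X] {f : X → X}

theorem perlink (hf : Continuous f) (hsurj : Function.Surjective f) (hsh : Shadowing f)
    {c : ℝ} (hcpos : 0 < c) (hc : BiAsympCExpWith f c) :
    ∃ δ₂ > 0, ∀ (p q : X) (mp mq : ℕ), 0 < mp → 0 < mq → f^[mp] p = p → f^[mq] q = q →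
      dist p q ≤ δ₂ → ∀ α > 0, ChainRel f α p q := by
  obtain ⟨δ, hδpos, hδ⟩ := zshadow hf hsurj hsh (c/4) (by linarith)
  obtain ⟨γ, hγpos, hγle, hγ⟩ := unif_modulus hf δ hδpos
  refine ⟨min γ (c/4), by positivity, ?_⟩
  intro p q mp mq hmp hmq hfp hfq hpq α hα
  set P := phat f p mp with hPdef
  set F := phat f q mq with hFdef
  have hPorb : FullOrbit f P := phat_fullOrbit hmp hfp
  have hForb : FullOrbit f F := phat_fullOrbit hmq hfq
  have hjunction : dist (f (P 0)) (F 1) ≤ δ := by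
    have h0 : P 0 = p := phat_zero
    have h1 : F 1 = f q := by
      have h := phat_nat (f := f) hmq hfq 1
      simpa using h
    rw [h0, h1]
    exact hγ p q (hpq.trans (min_le_left _ _))
  obtain ⟨w, hworb, hwP, hwF⟩ := glue hδ hPorb hForb hjunction
  have hbwd : Tendsto (fun t : ℕ => dist (w (-(t:ℤ))) (P (-(t:ℤ)))) atTop (𝓝 0) := by
    refine hc.2 w P hworb hPorb ?_
    intro t
    exact (hwP _ (by omega)).trans (by linarith)
  have hfwdbound : ∀ k : ℕ, dist (w k) (F k) ≤ c := by
    intro k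
    rcases Nat.eq_zero_or_pos k with h | h
    · subst h
      calc dist (w 0) (F 0) ≤ dist (w 0) (P 0) + dist (P 0) (F 0) := dist_triangle _ _ _
        _ ≤ c/4 + c/4 := by
            push_cast
            refine add_le_add ((hwP 0 (le_refl 0)).trans (by linarith)) ?_
            have h0P : P 0 = p := phat_zero
            have h0F : F 0 = q := phat_zero
            rw [h0P, h0F]
            exact hpq.trans (min_le_right _ _)
        _ ≤ c := by linarith
    · exact (hwF k (by exact_mod_cast h)).trans (by linarith)
  have hfwd : Tendsto (fun k : ℕ => dist (w k) (F k)) atTop (𝓝 0) :=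
    hc.1 w F hworb hForb hfwdbound
  obtain ⟨t, ht⟩ := (hbwd.eventually_le_const hα).exists
  obtain ⟨k, hk⟩ := ((hfwd.comp (tendsto_add_atTop_nat 1)).eventually_le_const hα).exists
  simp only [Function.comp_apply] at hk
  set r : ℕ := ((-(t:ℤ)-1) % (mp:ℤ)).toNat with hrdef
  have hPt1 : P (-(t:ℤ)-1) = f^[r] p := rfl
  have c1 : ChainRel f α p (P (-(t:ℤ)-1)) := by
    refine chainRel_jump (le_of_lt hα) (r + mp - 1) ?_
    rw [show r + mp - 1 + 1 = r + mp by omega, hPt1, Function.iterate_add_apply, hfp]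
    simp; linarith
  have c2 : ChainRel f α (P (-(t:ℤ)-1)) (w 0) := by
    refine chainRel_enter (le_of_lt hα) hworb t ?_
    have h1 : f (P (-(t:ℤ)-1)) = P (-(t:ℤ)) := by
      have h2 := hPorb (-(t:ℤ)-1)
      rwa [show -(t:ℤ)-1+1 = -(t:ℤ) by ring] at h2
    rw [h1, dist_comm]
    exact ht
  have c3 : ChainRel f α (w 0) (F ((k+1 : ℕ):ℤ)) :=
    chainRel_exit (le_of_lt hα) hworb (k+1) (by omega) hk
  set r' : ℕ := (((k+1:ℕ):ℤ) % (mq:ℤ)).toNat with hr'def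
  have hFk : F ((k+1:ℕ):ℤ) = f^[r'] q := rfl
  have hr'1 : r' + 1 ≤ mq * (r' + 1) := Nat.le_mul_of_pos_left _ hmq
  have c4 : ChainRel f α (F ((k+1:ℕ):ℤ)) q := by
    refine chainRel_jump (le_of_lt hα) (mq * (r'+1) - r' - 1) ?_
    rw [show mq * (r'+1) - r' - 1 + 1 = mq * (r' + 1) - r' by omega, hFk,
      ← Function.iterate_add_apply, show mq * (r'+1) - r' + r' = mq * (r'+1) by omega,
      iterate_mul_periodic hfq]
    simp; linarith
  exact chainRel_trans (chainRel_trans (chainRel_trans c1 c2) c3) c4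

end Main2

section Main3
variable {X : Type*} [MetricSpace X] [CompactSpace X] {f : X → X}

theorem phat_periodic_mul {q : X} {m : ℕ} (n : ℤ) (M : ℕ) :
    phat f q m (n + m * M) = phat f q m n := by
  induction M with
  | zero => simp
  | succ M ih =>
      rw [show n + (m:ℤ) * ((M:ℕ)+1 : ℕ) = (n + m * M) + m by push_cast; ring,
        phat_periodic, ih]

theorem ws_of_dist_tendsto {p a b : X}
    (h : Tendsto (fun n : ℕ => dist (f^[n] b) (f^[n] a)) atTop (𝓝 0))
    (hb : b ∈ Ws f p) : a ∈ Ws f p := by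
  have hb' : Tendsto (fun n : ℕ => dist (f^[n] p) (f^[n] b)) atTop (𝓝 0) := hb
  have hsum : Tendsto (fun n : ℕ => dist (f^[n] p) (f^[n] b) + dist (f^[n] b) (f^[n] a))
      atTop (𝓝 0) := by
    simpa using hb'.add h
  exact squeeze_zero (fun n => dist_nonneg) (fun n => dist_triangle _ _ _) hsum

theorem main_local (hf : Continuous f) (hsurj : Function.Surjective f) (hsh : Shadowing f)
    {c : ℝ} (hcpos : 0 < c) (hc : BiAsympCExpWith f c) {B : Set X} (hB : IsBasicSet f B)
    {p : X} {mp : ℕ} (hmp : 0 < mp) (hfp : f^[mp] p = p) :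
    ∃ δ > 0, ∀ y ∈ B, ∀ z, z ∈ Ws f p → z ∈ B → dist y z < δ →
      y ∈ closure (Ws f p ∩ B) := by
  obtain ⟨δZ, hδZpos, hδZ⟩ := zshadow hf hsurj hsh (c/4) (by linarith)
  obtain ⟨γ₀, hγ₀pos, hγ₀le, hγ₀⟩ := unif_modulus hf δZ hδZpos
  obtain ⟨δ₂, hδ₂pos, hδ₂⟩ := perlink hf hsurj hsh hcpos hc
  set δlink := min γ₀ (c/2) with hδlinkdef
  have hδlinkpos : 0 < δlink := lt_min hγ₀pos (by linarith)
  refine ⟨δlink/2, by positivity, ?_⟩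
  intro y hyB z hzWs hzB hdyz
  rw [Metric.mem_closure_iff]
  intro η hη
  set ε₁ := min (η/3) (min (δlink/2) (min (δ₂/4) (c/4))) with hε₁def
  have hε₁pos : 0 < ε₁ :=
    lt_min (by linarith) (lt_min (by linarith) (lt_min (by linarith) (by linarith)))
  have hε₁η : ε₁ ≤ η/3 := min_le_left _ _
  have hε₁link : ε₁ ≤ δlink/2 := le_trans (min_le_right _ _) (min_le_left _ _)
  have hε₁δ₂ : ε₁ ≤ δ₂/4 :=
    le_trans (min_le_right _ _) (le_trans (min_le_right _ _) (min_le_left _ _))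
  have hε₁c : ε₁ ≤ c/4 :=
    le_trans (min_le_right _ _) (le_trans (min_le_right _ _) (min_le_right _ _))
  have hycr : ChainRecurrent f y := cr_of_mem_B hB hyB
  obtain ⟨n₀, q, vhat, hn₀, hq, hvorb, hqy, hvy, hfwdA, hbwdA, hchainyq, hchainqy⟩ :=
    lemmaA hf hsurj hsh hcpos hc hε₁pos (by linarith) hycr
  set Q := phat f q n₀ with hQdef
  have hQorb : FullOrbit f Q := phat_fullOrbit hn₀ hq
  -- q lies in B
  have hqB : q ∈ B := by
    refine mem_B_of_chains hB ?_
    intro α hα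
    have hε'pos : 0 < min (α/2) ε₁ := lt_min (by linarith) hε₁pos
    obtain ⟨n₀', q', vhat', hn₀', hq', hvorb', hq'y, hv'y, _, _, hchainyq', hchainq'y⟩ :=
      lemmaA hf hsurj hsh hcpos hc hε'pos (le_trans (min_le_right _ _) (by linarith)) hycr
    have hqq' : dist q q' ≤ δ₂ := by
      calc dist q q' ≤ dist q y + dist y q' := dist_triangle _ _ _
        _ ≤ ε₁ + ε₁ := by
            refine add_le_add hqy ?_
            rw [dist_comm]
            exact hq'y.trans (min_le_right _ _)
        _ ≤ δ₂ := by linarith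
    constructor
    · refine ⟨y, hyB, ?_⟩
      have l1 := hδ₂ q q' n₀ n₀' hn₀ hn₀' hq hq' hqq' α hα
      have l2 : ChainRel f α q' y :=
        chainRel_mono (le_trans (min_le_left _ _) (by linarith)) hchainq'y
      exact chainRel_trans l1 l2
    · refine ⟨y, hyB, ?_⟩
      have l1 : ChainRel f α y q' := by
        refine chainRel_mono ?_ hchainyq'
        have := min_le_left (α/2) ε₁
        linarith
      have l2 := hδ₂ q' q n₀' n₀ hn₀' hn₀ hq' hq (by rwa [dist_comm]) α hα
      exact chainRel_trans l1 l2
  -- glue the periodic orbit of q to the forward orbit of z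
  obtain ⟨zhat, hzorb, hzhat0, hznat⟩ := exists_fullOrbit_through hsurj z
  have hqz : dist q z ≤ δlink := by
    calc dist q z ≤ dist q y + dist y z := dist_triangle _ _ _
      _ ≤ ε₁ + δlink/2 := add_le_add hqy (le_of_lt hdyz)
      _ ≤ δlink := by linarith
  have hjun1 : dist (f (Q 0)) (zhat 1) ≤ δZ := by
    have h0 : Q 0 = q := phat_zero
    have h1 : zhat 1 = f z := by simpa using hznat 1
    rw [h0, h1]
    exact hγ₀ q z (hqz.trans (min_le_left _ _))
  obtain ⟨w, hworb, hwQ, hwz⟩ := glue hδZ hQorb hzorb hjun1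
  have hwbwd : Tendsto (fun t : ℕ => dist (w (-(t:ℤ))) (Q (-(t:ℤ)))) atTop (𝓝 0) :=
    hc.2 w Q hworb hQorb (fun t => (hwQ _ (by omega)).trans (by linarith))
  have hwfwd : Tendsto (fun k : ℕ => dist (w k) (f^[k] z)) atTop (𝓝 0) := by
    have hbound : ∀ k : ℕ, dist (w k) (zhat k) ≤ c := by
      intro k
      rcases Nat.eq_zero_or_pos k with h | h
      · subst h
        calc dist (w 0) (zhat 0) ≤ dist (w 0) (Q 0) + dist (Q 0) (zhat 0) := dist_triangle _ _ _
          _ ≤ c/4 + (δlink) := by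
              push_cast
              refine add_le_add ((hwQ 0 (le_refl 0)).trans (by linarith)) ?_
              rw [hzhat0]
              have h0 : Q 0 = q := phat_zero
              rw [h0]
              exact hqz
          _ ≤ c := by
              have : δlink ≤ c/2 := min_le_right _ _
              linarith
      · exact (hwz k (by exact_mod_cast h)).trans (by linarith)
    have h := hc.1 w zhat hworb hzorb hbound
    exact h.congr fun k => by rw [hznat k]
  -- second gluing: the past of vhat with the orbit of w, with matching phases
  set ε₂ := min (η/3) (c/4) with hε₂def
  have hε₂pos : 0 < ε₂ := lt_min (by linarith) (by linarith)
  obtain ⟨δZ₂, hδZ₂pos, hδZ₂⟩ := zshadow hf hsurj hsh ε₂ hε₂pos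
  obtain ⟨T1, hT1⟩ := eventually_atTop.mp
    (hfwdA.eventually_le_const (show (0:ℝ) < min (δZ₂/2) (c/4) by positivity))
  obtain ⟨T2, hT2⟩ := eventually_atTop.mp
    (hwbwd.eventually_le_const (show (0:ℝ) < min (δZ₂/2) (c/4) by positivity))
  set s := max T1 T2 + 1 with hsdef
  set M := s + max T1 T2 + 1 with hMdef
  set L := (n₀ * mp) * M with hLdef
  set k := L - s with hkdef
  have hnm : 0 < n₀ * mp := Nat.mul_pos hn₀ hmp
  have hMle : M ≤ L := by rw [hLdef]; exact Nat.le_mul_of_pos_left M hnm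
  have hks : k + s = L := by omega
  have hkT1 : T1 ≤ k := by omega
  have hsT2 : T2 ≤ s - 1 := by omega
  have hk1 : 1 ≤ k := by omega
  -- phase matching of Q
  have hQmatch : ∀ a b : ℤ, a + (k + s : ℕ) = b → Q a = Q b := by
    intro a b hab
    have h1 : Q (a + (n₀ : ℤ) * (mp * M : ℕ)) = Q a := phat_periodic_mul a (mp * M)
    rw [← h1]
    congr 1
    rw [← hab, hks, hLdef]
    push_cast
    ring
  -- the second gluing
  set P2 : ℤ → X := fun n => vhat (n + (k:ℤ)) with hP2def
  set F2 : ℤ → X := fun n => w (n + -(s:ℤ)) with hF2def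
  have hP2orb : FullOrbit f P2 := fullOrbit_shift hvorb (k:ℤ)
  have hF2orb : FullOrbit f F2 := fullOrbit_shift hworb (-(s:ℤ))
  have hjun2 : dist (f (P2 0)) (F2 1) ≤ δZ₂ := by
    have h1 : f (P2 0) = vhat ((k:ℤ)+1) := by
      simp only [hP2def]
      rw [zero_add]
      exact hvorb (k:ℤ)
    have h2 : F2 1 = w (1 - (s:ℤ)) := by
      simp only [hF2def]
      congr 1
      try ring
    have hQ12 : Q (1 - (s:ℤ)) = Q ((k:ℤ)+1) := by
      refine hQmatch _ _ ?_
      push_cast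
      ring
    have hterm1 : dist (vhat ((k:ℤ)+1)) (Q ((k:ℤ)+1)) ≤ δZ₂/2 := by
      have h := hT1 (k+1) (by omega)
      push_cast at h
      exact h.trans (min_le_left _ _)
    have hterm2 : dist (w (1 - (s:ℤ))) (Q (1 - (s:ℤ))) ≤ δZ₂/2 := by
      have h := hT2 (s-1) (by omega)
      have hcast : -((s-1 : ℕ) : ℤ) = 1 - (s:ℤ) := by
        have : 1 ≤ s := by omega
        push_cast [this]
        ring
      rw [hcast] at h
      exact h.trans (min_le_left _ _)
    rw [h1, h2]
    calc dist (vhat ((k:ℤ)+1)) (w (1 - (s:ℤ)))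
        ≤ dist (vhat ((k:ℤ)+1)) (Q ((k:ℤ)+1)) + dist (Q (1 - (s:ℤ))) (w (1 - (s:ℤ))) := by
          rw [hQ12]
          exact dist_triangle _ _ _
      _ ≤ δZ₂/2 + δZ₂/2 := add_le_add hterm1 (by rw [dist_comm]; exact hterm2)
      _ = δZ₂ := by ring
  obtain ⟨u, huorb, huP, huF⟩ := glue hδZ₂ hP2orb hF2orb hjun2
  have hun0 : dist (u (-(k:ℤ))) (vhat 0) ≤ ε₂ := by
    have h := huP (-(k:ℤ)) (by omega)
    have h2 : P2 (-(k:ℤ)) = vhat 0 := by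
      simp only [hP2def]
      congr 1
      try ring
    rwa [h2] at h
  have hdyu : dist y (u (-(k:ℤ))) < η := by
    calc dist y (u (-(k:ℤ))) ≤ dist y (vhat 0) + dist (vhat 0) (u (-(k:ℤ))) :=
          dist_triangle _ _ _
      _ ≤ ε₁ + ε₂ := by
          refine add_le_add (by rw [dist_comm]; exact hvy) (by rw [dist_comm]; exact hun0)
      _ < η := by
          have h1 : ε₁ ≤ η/3 := hε₁η
          have h2 : ε₂ ≤ η/3 := min_le_left _ _
          linarith
  have hε₂c : ε₂ ≤ c/4 := min_le_right _ _
  -- forward asymptotics of u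
  have hufwd : Tendsto (fun j : ℕ => dist (u j) (F2 j)) atTop (𝓝 0) := by
    refine hc.1 u F2 huorb hF2orb ?_
    intro j
    rcases Nat.eq_zero_or_pos j with h | h
    · subst h
      have hF20 : F2 0 = w (-(s:ℤ)) := by
        simp only [hF2def]
        congr 1
        try ring
      have hP20 : P2 0 = vhat (k:ℤ) := by
        simp only [hP2def]
        congr 1
        try ring
      have hQks : Q (-(s:ℤ)) = Q (k:ℤ) := by
        refine hQmatch _ _ ?_
        push_cast
        ring
      have ht1 : dist (vhat (k:ℤ)) (Q (k:ℤ)) ≤ c/4 := (hT1 k hkT1).trans (min_le_right _ _)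
      have ht2 : dist (w (-(s:ℤ))) (Q (-(s:ℤ))) ≤ c/4 := by
        have h := hT2 s (by omega)
        exact h.trans (min_le_right _ _)
      push_cast
      calc dist (u 0) (F2 0)
          ≤ dist (u 0) (P2 0) + dist (P2 0) (F2 0) := dist_triangle _ _ _
        _ ≤ ε₂ + (dist (vhat (k:ℤ)) (Q (k:ℤ)) + dist (Q (-(s:ℤ))) (w (-(s:ℤ)))) := by
            refine add_le_add (huP 0 (le_refl 0)) ?_
            rw [hP20, hF20]
            calc dist (vhat (k:ℤ)) (w (-(s:ℤ)))
                ≤ dist (vhat (k:ℤ)) (Q (k:ℤ)) + dist (Q (k:ℤ)) (w (-(s:ℤ))) :=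
                  dist_triangle _ _ _
              _ ≤ dist (vhat (k:ℤ)) (Q (k:ℤ)) + dist (Q (-(s:ℤ))) (w (-(s:ℤ))) := by
                  rw [hQks]
        _ ≤ c/4 + (c/4 + c/4) := by
            refine add_le_add hε₂c (add_le_add ht1 (by rw [dist_comm]; exact ht2))
        _ ≤ c := by linarith
    · exact (huF j (by exact_mod_cast h)).trans (by linarith)
  -- backward asymptotics of u
  have hubwd : Tendsto (fun t : ℕ => dist (u (-(t:ℤ))) (P2 (-(t:ℤ)))) atTop (𝓝 0) :=
    hc.2 u P2 huorb hP2orb (fun t => (huP _ (by omega)).trans (by linarith))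
  -- f^[k+s] fixes p
  have hLp : f^[k + s] p = p := by
    rw [hks, hLdef, show (n₀ * mp) * M = mp * (n₀ * M) by ring]
    exact iterate_mul_periodic hfp (n₀ * M)
  -- u (-k) is in the stable set of p
  have hWs : u (-(k:ℤ)) ∈ Ws f p := by
    show Tendsto (fun n : ℕ => dist (f^[n] p) (f^[n] (u (-(k:ℤ))))) atTop (𝓝 0)
    rw [← tendsto_add_atTop_iff_nat (k + s + 1)]
    have hA : Tendsto (fun i : ℕ => dist (f^[i+1] p) (f^[i+1] z)) atTop (𝓝 0) := by
      have h : Tendsto (fun n : ℕ => dist (f^[n] p) (f^[n] z)) atTop (𝓝 0) := hzWs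
      exact h.comp (tendsto_add_atTop_nat 1)
    have hB2 : Tendsto (fun i : ℕ => dist (w ((i:ℤ)+1)) (f^[i+1] z)) atTop (𝓝 0) := by
      have h := hwfwd.comp (tendsto_add_atTop_nat 1)
      refine h.congr fun i => ?_
      simp only [Function.comp_apply]
      congr 2
      try push_cast
      try ring
    have hC : Tendsto (fun i : ℕ => dist (u ((i:ℤ) + s + 1)) (w ((i:ℤ)+1))) atTop (𝓝 0) := by
      have h := hufwd.comp (tendsto_add_atTop_nat (s+1))
      refine h.congr fun i => ?_
      simp only [Function.comp_apply]
      have hidx : ((i + (s+1) : ℕ) : ℤ) = (i:ℤ) + s + 1 := by push_cast; ring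
      have hF2i : F2 ((i:ℤ) + s + 1) = w ((i:ℤ)+1) := by
        simp only [hF2def]
        congr 1
        try ring
      rw [hidx, hF2i]
    have hsum : Tendsto (fun i : ℕ => dist (f^[i+1] p) (f^[i+1] z) +
        dist (f^[i+1] z) (w ((i:ℤ)+1)) + dist (w ((i:ℤ)+1)) (u ((i:ℤ) + s + 1))) atTop (𝓝 0) := by
      have h := (hA.add (hB2.congr fun i => by rw [dist_comm])).add
        (hC.congr fun i => by rw [dist_comm])
      simpa using h
    refine squeeze_zero (fun i => dist_nonneg) (fun i => ?_) hsum
    have e1 : f^[i + (k+s+1)] p = f^[i+1] p := by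
      rw [show i + (k+s+1) = (i+1) + (k+s) by ring, Function.iterate_add_apply, hLp]
    have e2 : f^[i + (k+s+1)] (u (-(k:ℤ))) = u ((i:ℤ) + s + 1) := by
      rw [show (i:ℤ) + s + 1 = -(k:ℤ) + (i + (k+s+1) : ℕ) by push_cast; ring,
        fullOrbit_iterate huorb]
    rw [e1, e2]
    calc dist (f^[i+1] p) (u ((i:ℤ) + s + 1))
        ≤ dist (f^[i+1] p) (f^[i+1] z) + dist (f^[i+1] z) (u ((i:ℤ) + s + 1)) :=
          dist_triangle _ _ _
      _ ≤ dist (f^[i+1] p) (f^[i+1] z) +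
            (dist (f^[i+1] z) (w ((i:ℤ)+1)) + dist (w ((i:ℤ)+1)) (u ((i:ℤ) + s + 1))) := by
          refine add_le_add (le_refl _) (dist_triangle _ _ _)
      _ = _ := by ring
  -- u (-k) belongs to B
  set U : ℤ → X := fun n => u (n + -(k:ℤ)) with hUdef
  have hUorb : FullOrbit f U := fullOrbit_shift huorb (-(k:ℤ))
  have hU0 : U 0 = u (-(k:ℤ)) := by
    simp only [hUdef]
    congr 1
    try ring
  have huB : u (-(k:ℤ)) ∈ B := by
    refine mem_B_of_chains hB ?_
    intro α hα
    constructor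
    · -- exit forward into the orbit of z
      obtain ⟨i, hi1, hi2⟩ : ∃ i : ℕ, dist (u ((i + (s+1) : ℕ) : ℤ)) (F2 ((i + (s+1) : ℕ) : ℤ)) ≤ α/2 ∧
          dist (w ((i+1 : ℕ) : ℤ)) (f^[i+1] z) ≤ α/2 := by
        have ev1 := (hufwd.comp (tendsto_add_atTop_nat (s+1))).eventually_le_const
          (show (0:ℝ) < α/2 by linarith)
        have ev2 := (hwfwd.comp (tendsto_add_atTop_nat 1)).eventually_le_const
          (show (0:ℝ) < α/2 by linarith)
        exact (ev1.and ev2).exists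
      refine ⟨f^[i+1] z, B_iter_invariant hf hB hzB (i+1), ?_⟩
      rw [← hU0]
      refine chainRel_exit (le_of_lt hα) hUorb (i + k + s + 1) (by omega) ?_
      have hUj : U ((i + k + s + 1 : ℕ) : ℤ) = u ((i + (s+1) : ℕ) : ℤ) := by
        simp only [hUdef]
        congr 1
        try push_cast
        try ring
      rw [hUj]
      have hF2i : F2 ((i + (s+1) : ℕ) : ℤ) = w ((i+1 : ℕ) : ℤ) := by
        simp only [hF2def]
        congr 1
        try push_cast
        try ring
      calc dist (u ((i + (s+1) : ℕ) : ℤ)) (f^[i+1] z)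
          ≤ dist (u ((i + (s+1) : ℕ) : ℤ)) (F2 ((i + (s+1) : ℕ) : ℤ)) +
              dist (F2 ((i + (s+1) : ℕ) : ℤ)) (f^[i+1] z) := dist_triangle _ _ _
        _ ≤ α/2 + α/2 := add_le_add hi1 (by rw [hF2i]; exact hi2)
        _ = α := by ring
    · -- enter from the periodic orbit of q
      obtain ⟨t, ht1', ht2'⟩ : ∃ t : ℕ, dist (u (-((t + k : ℕ) : ℤ))) (P2 (-((t + k : ℕ) : ℤ))) ≤ α/2 ∧
          dist (vhat (-(t:ℤ))) (Q (-(t:ℤ))) ≤ α/2 := by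
        have ev1 := (hubwd.comp (tendsto_add_atTop_nat k)).eventually_le_const
          (show (0:ℝ) < α/2 by linarith)
        have ev2 := hbwdA.eventually_le_const (show (0:ℝ) < α/2 by linarith)
        exact (ev1.and ev2).exists
      obtain ⟨r, hr⟩ := phat_mem_orbit (f := f) (q := q) hn₀ (-(t:ℤ) - 1)
      have hQB : Q (-(t:ℤ) - 1) ∈ B := by
        rw [hQdef, hr]
        exact B_iter_invariant hf hB hqB r
      refine ⟨Q (-(t:ℤ) - 1), hQB, ?_⟩
      rw [← hU0]
      refine chainRel_enter (le_of_lt hα) hUorb t ?_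
      have hfQ : f (Q (-(t:ℤ) - 1)) = Q (-(t:ℤ)) := by
        have h := hQorb (-(t:ℤ) - 1)
        rwa [show -(t:ℤ) - 1 + 1 = -(t:ℤ) by ring] at h
      have hUt : U (-(t:ℤ)) = u (-((t + k : ℕ) : ℤ)) := by
        simp only [hUdef]
        congr 1
        try push_cast
        try ring
      rw [hfQ, hUt]
      have hP2t : P2 (-((t + k : ℕ) : ℤ)) = vhat (-(t:ℤ)) := by
        simp only [hP2def]
        congr 1
        try push_cast
        try ring
      calc dist (Q (-(t:ℤ))) (u (-((t + k : ℕ) : ℤ)))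
          ≤ dist (Q (-(t:ℤ))) (vhat (-(t:ℤ))) + dist (vhat (-(t:ℤ))) (u (-((t + k : ℕ) : ℤ))) :=
            dist_triangle _ _ _
        _ ≤ α/2 + α/2 := by
            refine add_le_add (by rw [dist_comm]; exact ht2') ?_
            rw [dist_comm]
            have h := ht1'
            rwa [hP2t] at h
        _ = α := by ring
  exact ⟨u (-(k:ℤ)), ⟨hWs, huB⟩, hdyu⟩

end Main3

section Final
variable {X : Type*} [MetricSpace X] [CompactSpace X] {f : X → X}

theorem ws_image {p z : X} (hz : z ∈ Ws f p) : f z ∈ Ws f (f p) := by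
  have h : Tendsto (fun n : ℕ => dist (f^[n] p) (f^[n] z)) atTop (𝓝 0) := hz
  have h2 := h.comp (tendsto_add_atTop_nat 1)
  show Tendsto (fun n : ℕ => dist (f^[n] (f p)) (f^[n] (f z))) atTop (𝓝 0)
  refine h2.congr fun n => ?_
  simp only [Function.comp_apply]
  rw [← Function.iterate_succ_apply, ← Function.iterate_succ_apply]

theorem ws_preimage {p a y : X} (hfa : f a = y) (hy : y ∈ Ws f (f p)) : a ∈ Ws f p := by
  have h : Tendsto (fun n : ℕ => dist (f^[n] (f p)) (f^[n] y)) atTop (𝓝 0) := hy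
  show Tendsto (fun n : ℕ => dist (f^[n] p) (f^[n] a)) atTop (𝓝 0)
  rw [← tendsto_add_atTop_iff_nat 1]
  refine h.congr fun n => ?_
  rw [← hfa, ← Function.iterate_succ_apply, ← Function.iterate_succ_apply]

theorem cp_image_and_open'
    (hf : Continuous f) (hsurj : Function.Surjective f)
    (hexp : ∃ c > 0, BiAsympCExpWith f c) (hsh : Shadowing f)
    (B : Set X) (hB : IsBasicSet f B)
    (p : X) (hp : p ∈ Function.periodicPts f) (hpB : p ∈ B) :
    f '' closure (Ws f p ∩ B) = closure (Ws f (f p) ∩ B) ∧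
    ∃ U : Set X, IsOpen U ∧ closure (Ws f p ∩ B) = U ∩ B := by
  obtain ⟨c, hcpos, hc⟩ := hexp
  obtain ⟨mp, hmp, hfp⟩ := hp
  have hfp' : f^[mp] p = p := hfp
  have hBclosed : IsClosed B := B_isClosed hf hB
  constructor
  · -- the image formula
    have himg : f '' (Ws f p ∩ B) = Ws f (f p) ∩ B := by
      apply Set.Subset.antisymm
      · rintro _ ⟨z, ⟨hz1, hz2⟩, rfl⟩
        exact ⟨ws_image hz1, B_fwd_invariant hf hB hz2⟩
      · rintro yy ⟨hy1, hy2⟩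
        obtain ⟨a, haB, hfa⟩ := B_preimage hf hB hy2
        exact ⟨a, ⟨ws_preimage hfa hy1, haB⟩, hfa⟩
    have hcompact : IsCompact (closure (Ws f p ∩ B)) := isClosed_closure.isCompact
    have h1 : f '' closure (Ws f p ∩ B) = closure (f '' (Ws f p ∩ B)) := by
      apply Set.Subset.antisymm
      · exact image_closure_subset_closure_image hf
      · exact closure_minimal (Set.image_mono subset_closure) (hcompact.image hf).isClosed
    rw [h1, himg]
  · -- openness in B
    obtain ⟨δ, hδpos, hδ⟩ := main_local hf hsurj hsh hcpos hc hB hmp hfp'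
    refine ⟨⋃ x ∈ closure (Ws f p ∩ B), Metric.ball x δ,
      isOpen_biUnion (fun _ _ => Metric.isOpen_ball), ?_⟩
    apply Set.Subset.antisymm
    · intro x hx
      refine ⟨Set.mem_biUnion hx (Metric.mem_ball_self hδpos), ?_⟩
      have h2 : x ∈ closure B := closure_mono Set.inter_subset_right hx
      rwa [hBclosed.closure_eq] at h2
    · rintro x ⟨hxU, hxB⟩
      simp only [Set.mem_iUnion] at hxU
      obtain ⟨x', hx', hball⟩ := hxU
      rw [Metric.mem_ball] at hball
      obtain ⟨z, hzS, hdist⟩ := Metric.mem_closure_iff.mp hx' (δ - dist x x')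
        (by linarith)
      refine hδ x hxB z hzS.1 hzS.2 ?_
      calc dist x z ≤ dist x x' + dist x' z := dist_triangle _ _ _
        _ < δ := by linarith

end Final

/-- For a periodic point `p` in a basic set `B`, with `C_p = closure (W^s(p) ∩ B)`, one has
`f(C_p) = C_{f(p)}` and `C_p` is open in `B`. -/
theorem cp_image_and_open {X : Type*} [MetricSpace X] [CompactSpace X]
    (f : X → X) (hf : Continuous f) (hsurj : Function.Surjective f)
    (hexp : BiAsympCExpansive f) (hsh : Shadowing f)
    (B : Set X) (hB : IsBasicSet f B)
    (p : X) (hp : p ∈ Function.periodicPts f) (hpB : p ∈ B) :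
    f '' closure (Ws f p ∩ B) = closure (Ws f (f p) ∩ B) ∧
    ∃ U : Set X, IsOpen U ∧ closure (Ws f p ∩ B) = U ∩ B :=
  cp_image_and_open' hf hsurj hexp hsh B hB p hp hpB
end
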